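/- arXiv:1810.03395 — 7 statements merged into one kernel-verified Lean document; each statement's English description precedes it below -/
import Mathlib

section
/- Let G be a median graph and let v0 and v be two vertices of G. Then any two shortest (v0,v)-paths π and π' of G are homotopic: there exists a finite sequence π = π_1, π_2, …, π_k = π' of shortest (v0,v)-paths such that for each i = 1, …, k−1 the paths π_i and π_{i+1} coincide except at one position j, and the four vertices π_i(j−1), π_i(j), π_i(j+1), π_{i+1}(j) form a 4-cycle of G. -/
/-- The metric interval `I(u,v)` between two vertices of a graph. -/
abbrev mInterval {V : Type*} (G : SimpleGraph V) (u v : V) : Set V :=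
  {x | G.dist u x + G.dist x v = G.dist u v}

/-- A median graph: a connected graph in which every triple of vertices has a
unique median. -/
abbrev IsMedianGraph {V : Type*} (G : SimpleGraph V) : Prop :=
  G.Connected ∧ ∀ x y z : V, ∃! m : V,
    m ∈ mInterval G x y ∧ m ∈ mInterval G y z ∧ m ∈ mInterval G z x

open SimpleGraph Relation

namespace Stmt0Aux

variable {V : Type*} {G : SimpleGraph V}

/-- One elementary square move between geodesics. -/
def R (G : SimpleGraph V) (v0 v : V) (p q : G.Walk v0 v) : Prop :=
  p.length = G.dist v0 v ∧ q.length = G.dist v0 v ∧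
  ∃ j : ℕ, 0 < j ∧ j < p.length ∧
    (∀ n, n ≠ j → p.getVert n = q.getVert n) ∧
    p.getVert j ≠ q.getVert j ∧
    G.Adj (p.getVert (j - 1)) (q.getVert j) ∧
    G.Adj (q.getVert j) (p.getVert (j + 1))

lemma R.lift {v0 a v : V} (h : G.Adj v0 a) (hd : G.dist v0 v = G.dist a v + 1)
    {p q : G.Walk a v} (hR : R G a v p q) :
    R G v0 v (Walk.cons h p) (Walk.cons h q) := by
  obtain ⟨hp, hq, j, hj0, hjl, hsame, hne, h1, h2⟩ := hR
  obtain ⟨j', rfl⟩ : ∃ j', j = j' + 1 := ⟨j - 1, by omega⟩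
  refine ⟨by simp [hp, hd], by simp [hq, hd], j' + 2, by omega,
    by simp only [Walk.length_cons]; omega, ?_, ?_, ?_, ?_⟩
  · intro n hn
    match n with
    | 0 => simp
    | (k + 1) =>
      simp only [Walk.getVert_cons_succ]
      exact hsame k (by omega)
  · simpa only [Walk.getVert_cons_succ] using hne
  · show G.Adj ((Walk.cons h p).getVert (j' + 1)) _
    simpa only [Walk.getVert_cons_succ, Nat.add_sub_cancel] using h1
  · simpa only [Walk.getVert_cons_succ] using h2

lemma dist_tail {v0 a v : V} {n' : ℕ} (hc : G.Connected) (h : G.Adj v0 a)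
    (p' : G.Walk a v) (hl : p'.length = n') (hd : G.dist v0 v = n' + 1) :
    G.dist a v = n' := by
  have h1 : G.dist a v ≤ n' := hl ▸ SimpleGraph.dist_le p'
  have h2 : G.dist v0 v ≤ G.dist v0 a + G.dist a v := hc.dist_triangle
  have h3 : G.dist v0 a ≤ 1 := by
    simpa using SimpleGraph.dist_le (Walk.cons h Walk.nil)
  omega

lemma key (hG : IsMedianGraph G) : ∀ n : ℕ, ∀ v0 v : V, ∀ p q : G.Walk v0 v,
    G.dist v0 v = n → p.length = n → q.length = n →
    ReflTransGen (R G v0 v) p q := by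
  have hc := hG.1
  intro n
  induction n using Nat.strong_induction_on with
  | _ n IH =>
  intro v0 v p q hd hp hq
  match n, hd, hp, hq with
  | 0, hd, hp, hq =>
    cases p with
    | nil =>
      cases q with
      | nil => exact ReflTransGen.refl
      | cons h q' => simp at hq
    | cons h p' => simp at hp
  | (n' + 1), hd, hp, hq =>
    cases p with
    | nil => simp at hp
    | @cons _ a _ hpa p' =>
    cases q with
    | nil => simp at hq
    | @cons _ b _ hqb q' =>
    have hp' : p'.length = n' := by simpa using hp
    have hq' : q'.length = n' := by simpa using hq
    have hda : G.dist a v = n' := dist_tail hc hpa p' hp' hd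
    have hdb : G.dist b v = n' := dist_tail hc hqb q' hq' hd
    by_cases hab : a = b
    · subst hab
      have chain := IH n' (by omega) a v p' q' hda hp' hq'
      exact ReflTransGen.lift (Walk.cons hpa)
        (fun x y hxy => R.lift hpa (by omega) hxy) _ _ chain
    · obtain ⟨n'', rfl⟩ : ∃ m, n' = m + 1 := by
        refine ⟨n' - 1, ?_⟩
        rcases Nat.eq_zero_or_pos n' with h0 | h0
        · exfalso
          subst h0
          have ha : a = v := by
            cases p' with
            | nil => rfl
            | cons _ _ => simp at hp'
          have hb : b = v := by
            cases q' with
            | nil => rfl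
            | cons _ _ => simp at hq'
          exact hab (ha.trans hb.symm)
        · omega
      obtain ⟨mm, ⟨hmab, hmbv, hmva⟩, -⟩ := hG.2 a b v
      simp only [mInterval, Set.mem_setOf_eq] at hmab hmbv hmva
      have hab2 : G.dist a b ≤ 2 := by
        simp only [Walk.length_cons, Walk.length_nil] at *;
        have := SimpleGraph.dist_le (Walk.cons hpa.symm (Walk.cons hqb Walk.nil));
        simpa using this
      have hvm : G.dist v mm = G.dist mm v := SimpleGraph.dist_comm
      have hma : G.dist mm a = G.dist a mm := SimpleGraph.dist_comm
      have hva : G.dist v a = G.dist a v := SimpleGraph.dist_comm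
      have hvb : G.dist v b = G.dist b v := SimpleGraph.dist_comm
      have hbm : G.dist b mm = G.dist mm b := SimpleGraph.dist_comm
      have hxne : G.dist a mm ≠ 0 := by
        intro h0
        have heq : a = mm := ((hc.preconnected a mm).dist_eq_zero_iff).mp h0
        rw [← heq] at hmbv
        have : G.dist b a = 0 := by omega
        exact hab (((hc.preconnected b a).dist_eq_zero_iff).mp this).symm
      have hyne : G.dist mm b ≠ 0 := by
        intro h0
        have heq : mm = b := ((hc.preconnected mm b).dist_eq_zero_iff).mp h0
        rw [heq] at hmva
        have : G.dist b a = 0 := by omega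
        exact hab (((hc.preconnected b a).dist_eq_zero_iff).mp this).symm
      have hx1 : G.dist a mm = 1 := by omega
      have hy1 : G.dist mm b = 1 := by omega
      have hz : G.dist mm v = n'' := by omega
      have ham : G.Adj a mm := SimpleGraph.dist_eq_one_iff_adj.mp hx1
      have hmbadj : G.Adj mm b := SimpleGraph.dist_eq_one_iff_adj.mp hy1
      obtain ⟨r, hr⟩ := (hc.preconnected mm v).exists_walk_length_eq_dist
      rw [hz] at hr
      have ht2 : (Walk.cons ham r).length = n'' + 1 := by simp [hr]
      have ht1 : (Walk.cons hmbadj.symm r).length = n'' + 1 := by simp [hr]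
      have chain1 := IH (n'' + 1) (by omega) a v p' (Walk.cons ham r) hda hp' ht2
      have chain3 := IH (n'' + 1) (by omega) b v (Walk.cons hmbadj.symm r) q' hdb ht1 hq'
      have lift1 := ReflTransGen.lift (Walk.cons hpa)
        (fun x y hxy => R.lift hpa (by omega) hxy) _ _ chain1
      have lift3 := ReflTransGen.lift (Walk.cons hqb)
        (fun x y hxy => R.lift hqb (by omega) hxy) _ _ chain3
      have hmove : R G v0 v (Walk.cons hpa (Walk.cons ham r))
          (Walk.cons hqb (Walk.cons hmbadj.symm r)) := by
        refine ⟨by simp [hr]; omega, by simp [hr]; omega, 1, Nat.one_pos,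
          by simp [hr], ?_, ?_, ?_, ?_⟩
        · intro n hn
          match n with
          | 0 => simp
          | (k + 2) => simp only [Walk.getVert_cons_succ]
        · simpa using hab
        · simpa using hqb
        · simpa using hmbadj.symm
      exact lift1.trans ((ReflTransGen.single hmove).trans lift3)

lemma chain_lengths {v0 v : V} :
    ∀ {a : G.Walk v0 v} {l : List (G.Walk v0 v)},
      List.Chain (R G v0 v) a l → a.length = G.dist v0 v →
      ∀ x ∈ a :: l, x.length = G.dist v0 v := by
  intro a l h ha
  induction l generalizing a with
  | nil => simpa using ha
  | cons b t ih =>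
    cases h with
    | cons_cons hab ht =>
      intro x hx
      rcases List.mem_cons.mp hx with rfl | hx'
      · exact ha
      · exact ih ht hab.2.1 x hx'

end Stmt0Aux

/-- In a median graph, any two shortest `(v₀,v)`-paths are
homotopic: they are connected by a finite sequence of shortest paths in which
consecutive paths differ in a single position, the four vertices around the
differing position forming a 4-cycle. -/


theorem stmt0 {V : Type*} (G : SimpleGraph V) (hG : IsMedianGraph G) (v0 v : V)
    (p q : G.Walk v0 v)
    (hp : p.length = G.dist v0 v) (hq : q.length = G.dist v0 v) :
    ∃ (k : ℕ) (f : Fin (k + 1) → G.Walk v0 v),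
      f 0 = p ∧ f (Fin.last k) = q ∧
      (∀ i, (f i).length = G.dist v0 v) ∧
      ∀ i : Fin k, ∃ j : ℕ, 0 < j ∧ j < (f i.castSucc).length ∧
        (∀ n, n ≠ j → (f i.castSucc).getVert n = (f i.succ).getVert n) ∧
        (f i.castSucc).getVert j ≠ (f i.succ).getVert j ∧
        G.Adj ((f i.castSucc).getVert (j - 1)) ((f i.succ).getVert j) ∧
        G.Adj ((f i.succ).getVert j) ((f i.castSucc).getVert (j + 1)) := by
  have hchain := Stmt0Aux.key hG (G.dist v0 v) v0 v p q rfl hp hq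
  obtain ⟨l, hl, hlast⟩ := List.exists_isChain_cons_of_relationReflTransGen hchain
  refine ⟨l.length, fun i => (p :: l).get ⟨i.val, by simp; omega⟩, rfl, ?_, ?_, ?_⟩
  · rw [← hlast, List.getLast_eq_getElem]
    simp [List.get_eq_getElem]
  · intro i
    exact Stmt0Aux.chain_lengths hl hp _ (List.get_mem _ _)
  · intro i
    have h' : List.Chain' (Stmt0Aux.R G v0 v) (p :: l) := hl
    have := List.isChain_iff_getElem.mp h' i.val (by simp)
    exact this.2.2
end

section
/- Let (E, λ) be an M-labeled event structure over a trace alphabet M = (Σ, I). If π and π' are two shortest (v0,v)-paths of G(E) ending at the same vertex v, then σ(π') belongs to the trace ⟨σ(π)⟩, i.e., σ(π') ~_I σ(π). -/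
/-- An event structure: a set of events with a causal partial order and a
conflict relation that is irreflexive, symmetric and hereditary, such that
every event has finitely many causes. -/
structure EventStructure (E : Type*) where
  le : E → E → Prop
  conflict : E → E → Prop
  le_refl : ∀ e, le e e
  le_trans : ∀ e₁ e₂ e₃, le e₁ e₂ → le e₂ e₃ → le e₁ e₃
  le_antisymm : ∀ e₁ e₂, le e₁ e₂ → le e₂ e₁ → e₁ = e₂
  conflict_irrefl : ∀ e, ¬ conflict e e
  conflict_symm : ∀ e₁ e₂, conflict e₁ e₂ → conflict e₂ e₁
  conflict_le : ∀ e₁ e₂ e₃, conflict e₁ e₂ → le e₂ e₃ → conflict e₁ e₃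
  finite_cause : ∀ e, Set.Finite {e' | le e' e}

namespace EventStructure

variable {E : Type*} (ES : EventStructure E)

/-- A configuration: a finite, downward-closed, conflict-free set of events. -/
abbrev IsConfig (c : Finset E) : Prop :=
  (∀ e ∈ c, ∀ e', ES.le e' e → e' ∈ c) ∧ ∀ e ∈ c, ∀ e' ∈ c, ¬ ES.conflict e e'

/-- The type of configurations of an event structure. -/
abbrev Config : Type _ := {c : Finset E // ES.IsConfig c}

/-- `c'` is obtained from the configuration `c` by adding the single event `e`. -/
abbrev Extends (c c' : ES.Config) (e : E) : Prop :=
  e ∉ c.1 ∧ ∀ x, x ∈ c'.1 ↔ x = e ∨ x ∈ c.1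

/-- `c'` is obtained from the configuration `c` by adding a single event. -/
abbrev Covers (c c' : ES.Config) : Prop := ∃ e, ES.Extends c c' e

/-- The (undirected) graph `G(E)` of the domain of an event structure:
vertices are configurations, edges join configurations differing in one event. -/
def configGraph : SimpleGraph ES.Config where
  Adj c c' := ES.Covers c c' ∨ ES.Covers c' c
  symm := ⟨fun c c' h => Or.symm h⟩
  loopless := by
    refine ⟨?_⟩
    intro c h
    have key : ¬ ES.Covers c c := by
      rintro ⟨e, he, hmem⟩
      exact he ((hmem e).mpr (Or.inl rfl))
    exact h.elim key key

/-- The empty configuration, i.e. the basepoint `v₀` of the domain. -/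
def emptyConfig : ES.Config :=
  ⟨∅, fun e he => absurd he (Finset.notMem_empty e),
      fun e he => absurd he (Finset.notMem_empty e)⟩

/-- Minimal conflict `e #_μ e'`. -/
abbrev MinConflict (e e' : E) : Prop :=
  ES.conflict e e' ∧ ¬ ∃ e'', e'' ≠ e ∧ e'' ≠ e' ∧
    ((ES.le e'' e ∧ ES.conflict e'' e') ∨ (ES.le e'' e' ∧ ES.conflict e'' e))

/-- `e` is an immediate predecessor of `e'`. -/
abbrev ImmPred (e e' : E) : Prop :=
  ES.le e e' ∧ e ≠ e' ∧ ∀ e'', ES.le e e'' → ES.le e'' e' → e'' = e ∨ e'' = e'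

/-- Two events are concurrent: order-incomparable and not in conflict. -/
abbrev Concurrent (e e' : E) : Prop :=
  ¬ ES.le e e' ∧ ¬ ES.le e' e ∧ ¬ ES.conflict e e'

/-- An event `e` is enabled at a configuration `c`. -/
abbrev Enabled (c : ES.Config) (e : E) : Prop := ∃ c' : ES.Config, ES.Extends c c' e

end EventStructure

open Classical in
/-- The label of the edge between two configurations (label of the unique event
in their symmetric difference). -/
noncomputable def stepLabel {E A : Type*} [Nonempty A] (lab : E → A)
    (c c' : Finset E) : A :=
  if h : ∃ e, (e ∈ c' ∧ e ∉ c) ∨ (e ∈ c ∧ e ∉ c') then lab h.choose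
  else Classical.arbitrary A

/-- The word `σ(π)` of labels read along a walk of the domain graph. -/
noncomputable def walkWord {E A : Type*} [Nonempty A] {ES : EventStructure E}
    (lab : E → A) {c c' : ES.Config} (p : ES.configGraph.Walk c c') : List A :=
  p.darts.map fun d => stepLabel lab d.toProd.1.1 d.toProd.2.1

/-- One elementary commutation step on words: exchange two adjacent independent
letters. -/
inductive SwapStep {A : Type*} (I : A → A → Prop) : List A → List A → Prop
  | swap (u v : List A) (a b : A) (h : I a b) :
      SwapStep I (u ++ a :: b :: v) (u ++ b :: a :: v)

/-- Mazurkiewicz trace equivalence `~_I`: the reflexive-transitive closure of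
elementary commutations. -/
abbrev TraceEquiv {A : Type*} (I : A → A → Prop) : List A → List A → Prop :=
  Relation.ReflTransGen (SwapStep I)

/-- `(ES, lab)` is an `M`-labeled event structure over the trace alphabet
`M = (A, I)` (axioms (LES1)-(LES3)). -/
structure IsTraceLabeling {E A : Type*} (ES : EventStructure E)
    (I : A → A → Prop) (lab : E → A) : Prop where
  les1 : ∀ e e', ES.MinConflict e e' → lab e ≠ lab e'
  les2 : ∀ e e', ES.ImmPred e e' ∨ ES.MinConflict e e' → ¬ I (lab e) (lab e')
  les3 : ∀ e e', ¬ I (lab e) (lab e') → ES.le e e' ∨ ES.le e' e ∨ ES.conflict e e'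

section Aux

/-! ### Word-level lemmas -/

lemma swapStep_cons {A : Type*} {I : A → A → Prop} {x y : List A} (a : A)
    (h : SwapStep I x y) : SwapStep I (a :: x) (a :: y) := by
  cases h with
  | swap u v a' b' hab =>
    simpa using SwapStep.swap (a :: u) v a' b' hab

lemma traceEquiv_cons {A : Type*} {I : A → A → Prop} {x y : List A} (a : A)
    (h : TraceEquiv I x y) : TraceEquiv I (a :: x) (a :: y) := by
  induction h with
  | refl => exact Relation.ReflTransGen.refl
  | tail _ h2 ih => exact ih.tail (swapStep_cons a h2)

lemma traceEquiv_bubble {A : Type*} {I : A → A → Prop} (b : A) :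
    ∀ (u w : List A), (∀ x ∈ u, I x b) →
      TraceEquiv I (u ++ b :: w) (b :: (u ++ w))
  | [], w, _ => Relation.ReflTransGen.refl
  | a :: u, w, h => by
    have ih := traceEquiv_bubble b u w (fun x hx => h x (List.mem_cons_of_mem a hx))
    have h1 : TraceEquiv I (a :: (u ++ b :: w)) (a :: b :: (u ++ w)) :=
      traceEquiv_cons a ih
    have h2 : SwapStep I ([] ++ a :: b :: (u ++ w)) ([] ++ b :: a :: (u ++ w)) :=
      SwapStep.swap [] (u ++ w) a b (h a List.mem_cons_self)
    simpa using h1.tail (by simpa using h2)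

/-! ### Linearizations -/

/-- Relative downward closure of every prefix of a list. -/
def DCpre {E : Type*} (ES : EventStructure E) (l : List E) : Prop :=
  ∀ n, ∀ e ∈ l.take n, ∀ e', ES.le e' e → e' ∈ l → e' ∈ l.take n

lemma key_lemma {E A : Type*} (ES : EventStructure E) (I : A → A → Prop)
    (lab : E → A)
    (hles3 : ∀ e e', ¬ I (lab e) (lab e') → ES.le e e' ∨ ES.le e' e ∨ ES.conflict e e')
    [DecidableEq E] :
    ∀ (l' l : List E) (v : Finset E),
      (∀ e ∈ v, ∀ e' ∈ v, ¬ ES.conflict e e') →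
      l.Nodup → l'.Nodup → l.toFinset = v → l'.toFinset = v →
      DCpre ES l → DCpre ES l' →
      TraceEquiv I (l.map lab) (l'.map lab) := by
  intro l'
  induction l' with
  | nil =>
    intro l v _ _ _ hlv hl'v _ _
    have : l.toFinset = (∅ : Finset E) := by
      rw [hlv, ← hl'v]; simp
    have : l = [] := by simpa using this
    subst this
    exact Relation.ReflTransGen.refl
  | cons b t' ih =>
    intro l v hconf hnd hnd' hlv hl'v hdc hdc'
    have hbv : b ∈ v := by rw [← hl'v]; simp
    have hbl : b ∈ l := by rw [← List.mem_toFinset, hlv]; exact hbv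
    obtain ⟨l₁, l₂, rfl⟩ := List.append_of_mem hbl
    have hnd1 : b ∉ l₁ ∧ b ∉ l₂ ∧ l₁.Nodup ∧ l₂.Nodup ∧ (l₁ ++ l₂).Nodup := by
      rw [List.nodup_append] at hnd
      obtain ⟨h1, h2, h3⟩ := hnd
      rw [List.nodup_cons] at h2
      refine ⟨fun hb => h3 b hb b List.mem_cons_self rfl, h2.1, h1, h2.2, ?_⟩
      rw [List.nodup_append]
      exact ⟨h1, h2.2, fun x hx y hy => h3 x hx y (List.mem_cons_of_mem b hy)⟩
    have hbt' : b ∉ t' := (List.nodup_cons.mp hnd').1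
    have hndt' : t'.Nodup := (List.nodup_cons.mp hnd').2
    -- every element before b in l is independent from b
    have hI : ∀ x ∈ l₁, I (lab x) (lab b) := by
      intro x hx
      by_contra hni
      have hxl : x ∈ l₁ ++ b :: l₂ := List.mem_append_left _ hx
      have hxv : x ∈ v := by
        rw [← hlv]; simp only [List.mem_toFinset]; exact hxl
      have hxne : x ≠ b := fun h => hnd1.1 (h ▸ hx)
      rcases hles3 x b hni with hle | hle | hcf
      · -- x ≤ b : contradiction using the first prefix of l' = b :: t'
        have hxl' : x ∈ b :: t' := by rw [← List.mem_toFinset, hl'v]; exact hxv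
        have := hdc' 1 b (by simp) x hle hxl'
        simp at this
        exact hxne this
      · -- b ≤ x : contradiction using the prefix l₁ of l
        have hxtake : x ∈ (l₁ ++ b :: l₂).take l₁.length := by
          rw [List.take_left]; exact hx
        have := hdc l₁.length x hxtake b hle hbl
        rw [List.take_left] at this
        exact hnd1.1 this
      · exact hconf x hxv b hbv hcf
    -- bubble b to the front
    have T1 : TraceEquiv I ((l₁ ++ b :: l₂).map lab)
        (lab b :: (l₁.map lab ++ l₂.map lab)) := by
      have := traceEquiv_bubble (lab b) (l₁.map lab) (l₂.map lab)
        (by intro y hy; obtain ⟨x, hx, rfl⟩ := List.mem_map.mp hy; exact hI x hx)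
      simpa using this
    -- apply the induction hypothesis to l₁ ++ l₂ and t' with ground set v.erase b
    have hterase : (l₁ ++ l₂).toFinset = v.erase b := by
      ext x
      simp only [List.toFinset_append, Finset.mem_union, List.mem_toFinset,
        Finset.mem_erase]
      constructor
      · intro hx
        refine ⟨?_, ?_⟩
        · rintro rfl
          rcases hx with h | h
          · exact hnd1.1 h
          · exact hnd1.2.1 h
        · rw [← hlv]; simp; tauto
      · rintro ⟨hne, hxv⟩
        rw [← hlv] at hxv
        simp at hxv
        tauto
    have ht'erase : t'.toFinset = v.erase b := by
      have : (b :: t').toFinset = v := hl'v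
      rw [List.toFinset_cons] at this
      rw [← this, Finset.erase_insert (by simpa using hbt')]
    have hdct' : DCpre ES t' := by
      intro n e he e' hle he'
      have h1 : e ∈ (b :: t').take (n + 1) := by
        simpa using List.mem_cons_of_mem b he
      have := hdc' (n + 1) e h1 e' hle (List.mem_cons_of_mem b he')
      simp only [List.take_succ_cons, List.mem_cons] at this
      rcases this with rfl | h
      · exact absurd he' hbt'
      · exact h
    have hdct : DCpre ES (l₁ ++ l₂) := by
      intro n e he e' hle he'
      have he'l : e' ∈ l₁ ++ b :: l₂ := by
        rcases List.mem_append.mp he' with h | h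
        · exact List.mem_append_left _ h
        · exact List.mem_append_right _ (List.mem_cons_of_mem b h)
      have he'ne : e' ≠ b := by
        rintro rfl
        rcases List.mem_append.mp he' with h | h
        · exact hnd1.1 h
        · exact hnd1.2.1 h
      by_cases hn : n ≤ l₁.length
      · -- take n (l₁ ++ l₂) = take n l₁ = take n (l₁ ++ b :: l₂)
        have e1 : (l₁ ++ l₂).take n = l₁.take n := by
          rw [List.take_append, Nat.sub_eq_zero_of_le hn]
          simp
        have e2 : (l₁ ++ b :: l₂).take n = l₁.take n := by
          rw [List.take_append, Nat.sub_eq_zero_of_le hn]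
          simp
        rw [e1] at he ⊢
        have := hdc n e (by rw [e2]; exact he) e' hle he'l
        rwa [e2] at this
      · push_neg at hn
        have e1 : (l₁ ++ l₂).take n = l₁ ++ l₂.take (n - l₁.length) := by
          rw [List.take_append,
            List.take_of_length_le (le_of_lt hn)]
        have e2 : (l₁ ++ b :: l₂).take (n + 1) = l₁ ++ b :: l₂.take (n - l₁.length) := by
          rw [List.take_append,
            List.take_of_length_le (by omega : l₁.length ≤ n + 1)]
          congr 1
          have : n + 1 - l₁.length = (n - l₁.length) + 1 := by omega
          rw [this, List.take_succ_cons]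
        rw [e1] at he ⊢
        have hee : e ∈ (l₁ ++ b :: l₂).take (n + 1) := by
          rw [e2]
          rcases List.mem_append.mp he with h | h
          · exact List.mem_append_left _ h
          · exact List.mem_append_right _ (List.mem_cons_of_mem b h)
        have := hdc (n + 1) e hee e' hle he'l
        rw [e2] at this
        rcases List.mem_append.mp this with h | h
        · exact List.mem_append_left _ h
        · rcases List.mem_cons.mp h with rfl | h
          · exact absurd rfl he'ne
          · exact List.mem_append_right _ h
    have hconf' : ∀ e ∈ v.erase b, ∀ e' ∈ v.erase b, ¬ ES.conflict e e' := by
      intro e he e' he'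
      exact hconf e (Finset.mem_of_mem_erase he) e' (Finset.mem_of_mem_erase he')
    have T2 : TraceEquiv I ((l₁ ++ l₂).map lab) (t'.map lab) :=
      ih (l₁ ++ l₂) (v.erase b) hconf' hnd1.2.2.2.2 hndt' hterase ht'erase hdct hdct'
    have T3 : TraceEquiv I (lab b :: (l₁.map lab ++ l₂.map lab))
        ((b :: t').map lab) := by
      have := traceEquiv_cons (lab b) T2
      simpa using this
    exact T1.trans T3

/-! ### Graph-side lemmas -/

namespace EventStructure

variable {E : Type*} {ES : EventStructure E}

lemma Extends.eq_insert [DecidableEq E] {c c' : ES.Config} {e : E}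
    (h : ES.Extends c c' e) : c'.1 = insert e c.1 := by
  ext x
  rw [h.2 x, Finset.mem_insert]

lemma Extends.card [DecidableEq E] {c c' : ES.Config} {e : E}
    (h : ES.Extends c c' e) : c'.1.card = c.1.card + 1 := by
  rw [h.eq_insert, Finset.card_insert_of_notMem h.1]

lemma card_le_of_walk : ∀ {c v : ES.Config} (w : ES.configGraph.Walk c v),
    v.1.card ≤ c.1.card + w.length := by
  intro c v w
  induction w with
  | nil => simp
  | @cons c c₂ v h w ih =>
    classical
    have hc2 : c₂.1.card ≤ c.1.card + 1 := by
      rcases h with ⟨e, he⟩ | ⟨e, he⟩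
      · rw [he.card]
      · rw [he.card]; omega
    calc v.1.card ≤ c₂.1.card + w.length := ih
      _ ≤ c.1.card + (w.length + 1) := by omega
      _ = c.1.card + (SimpleGraph.Walk.cons h w).length := by
          rw [SimpleGraph.Walk.length_cons]

lemma exists_maximal_event :
    ∀ (n : ℕ) (s : Finset E), s.card ≤ n → s.Nonempty →
      ∃ e ∈ s, ∀ x ∈ s, ES.le e x → x = e := by
  intro n
  induction n with
  | zero =>
    intro s hcard hne
    rw [Nat.le_zero, Finset.card_eq_zero] at hcard
    exact absurd hcard hne.ne_empty
  | succ n ih =>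
    intro s hcard hne
    classical
    obtain ⟨a, ha⟩ := hne
    set s' := s.filter (fun x => ES.le a x ∧ x ≠ a) with hs'
    by_cases hne' : s'.Nonempty
    · have hss : s' ⊂ s := by
        refine Finset.ssubset_iff_of_subset (Finset.filter_subset _ _) |>.mpr ?_
        exact ⟨a, ha, by simp [hs']⟩
      have hcard' : s'.card ≤ n := by
        have := Finset.card_lt_card hss
        omega
      obtain ⟨e, hes', hemax⟩ := ih s' hcard' hne'
      have hes : e ∈ s := Finset.mem_of_mem_filter _ hes'
      have hae : ES.le a e ∧ e ≠ a := by
        have := Finset.mem_filter.mp hes'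
        exact this.2
      refine ⟨e, hes, ?_⟩
      intro x hx hex
      have hax : ES.le a x := ES.le_trans _ _ _ hae.1 hex
      by_cases hxa : x = a
      · subst hxa
        exact absurd (ES.le_antisymm _ _ hex hae.1) hae.2
      · exact hemax x (Finset.mem_filter.mpr ⟨hx, hax, hxa⟩) hex
    · refine ⟨a, ha, ?_⟩
      intro x hx hax
      by_contra hxa
      exact hne' ⟨x, Finset.mem_filter.mpr ⟨hx, hax, hxa⟩⟩

lemma exists_increasing_walk :
    ∀ (n : ℕ) (v : ES.Config), v.1.card ≤ n →
      ∃ w : ES.configGraph.Walk ES.emptyConfig v, w.length = v.1.card := by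
  intro n
  induction n with
  | zero =>
    intro v hcard
    rw [Nat.le_zero, Finset.card_eq_zero] at hcard
    have : v = ES.emptyConfig := Subtype.ext hcard
    subst this
    exact ⟨SimpleGraph.Walk.nil, by simp [hcard]⟩
  | succ n ih =>
    intro v hcard
    classical
    by_cases hv : v.1 = ∅
    · have : v = ES.emptyConfig := Subtype.ext hv
      subst this
      exact ⟨SimpleGraph.Walk.nil, by simp [hv]⟩
    · obtain ⟨e, hev, hemax⟩ := exists_maximal_event v.1.card v.1 le_rfl
        (Finset.nonempty_of_ne_empty hv)
      have hconfig : ES.IsConfig (v.1.erase e) := by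
        constructor
        · intro x hx y hy
          have hxv : x ∈ v.1 := Finset.mem_of_mem_erase hx
          have hyv : y ∈ v.1 := v.2.1 x hxv y hy
          rw [Finset.mem_erase]
          refine ⟨?_, hyv⟩
          rintro rfl
          exact (Finset.mem_erase.mp hx).1 (hemax x hxv hy)
        · intro x hx y hy
          exact v.2.2 x (Finset.mem_of_mem_erase hx) y (Finset.mem_of_mem_erase hy)
      set c' : ES.Config := ⟨v.1.erase e, hconfig⟩ with hc'
      have hext : ES.Extends c' v e := by
        refine ⟨Finset.notMem_erase e v.1, ?_⟩
        intro x
        constructor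
        · intro hx
          by_cases hxe : x = e
          · exact Or.inl hxe
          · exact Or.inr (Finset.mem_erase.mpr ⟨hxe, hx⟩)
        · rintro (rfl | hx)
          · exact hev
          · exact Finset.mem_of_mem_erase hx
      have hadj : ES.configGraph.Adj c' v := Or.inl ⟨e, hext⟩
      have hcard' : c'.1.card ≤ n := by
        have : c'.1.card = v.1.card - 1 := by
          simp [hc', Finset.card_erase_of_mem hev]
        omega
      obtain ⟨w', hw'⟩ := ih c' hcard'
      refine ⟨w'.concat hadj, ?_⟩
      rw [SimpleGraph.Walk.length_concat, hw']
      have : c'.1.card = v.1.card - 1 := by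
        simp [hc', Finset.card_erase_of_mem hev]
      have hpos : 0 < v.1.card :=
        Finset.card_pos.mpr (Finset.nonempty_of_ne_empty hv)
      omega

lemma stepLabel_extends {A : Type*} [Nonempty A] {c c' : ES.Config} {e : E}
    (lab : E → A) (h : ES.Extends c c' e) :
    stepLabel lab c.1 c'.1 = lab e := by
  have hex : ∃ x, (x ∈ c'.1 ∧ x ∉ c.1) ∨ (x ∈ c.1 ∧ x ∉ c'.1) :=
    ⟨e, Or.inl ⟨(h.2 e).mpr (Or.inl rfl), h.1⟩⟩
  rw [stepLabel, dif_pos hex]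
  congr 1
  rcases hex.choose_spec with ⟨hmem, hnot⟩ | ⟨hmem, hnot⟩
  · rcases (h.2 _).mp hmem with heq | hc
    · exact heq
    · exact absurd hc hnot
  · exact absurd ((h.2 _).mpr (Or.inr hmem)) hnot

lemma walk_to_list {A : Type*} [Nonempty A] [DecidableEq E] (lab : E → A) :
    ∀ {c v : ES.Config} (w : ES.configGraph.Walk c v),
      c.1.card + w.length = v.1.card →
      ∃ l : List E, walkWord lab w = l.map lab ∧ l.Nodup ∧
        (∀ e ∈ l, e ∉ c.1) ∧ c.1 ∪ l.toFinset = v.1 ∧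
        ∀ n, ∀ e ∈ c.1 ∪ (l.take n).toFinset, ∀ e', ES.le e' e →
          e' ∈ c.1 ∪ (l.take n).toFinset := by
  intro c v w
  induction w with
  | nil =>
    rename_i u
    intro _
    refine ⟨[], rfl, List.nodup_nil, by simp, by simp, ?_⟩
    intro n e he e' hle
    simp only [List.take_nil, List.toFinset_nil, Finset.union_empty] at he ⊢
    exact u.2.1 e he e' hle
  | @cons c c₂ v h w ih =>
    intro hlen
    rw [SimpleGraph.Walk.length_cons] at hlen
    have hcover : ES.Covers c c₂ := by
      rcases h with hcov | ⟨e, he⟩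
      · exact hcov
      · exfalso
        have h1 : c.1.card = c₂.1.card + 1 := he.card
        have h2 := card_le_of_walk w
        omega
    obtain ⟨e, he⟩ := hcover
    have hc2 : c₂.1 = insert e c.1 := he.eq_insert
    have hlen2 : c₂.1.card + w.length = v.1.card := by
      rw [he.card]; omega
    obtain ⟨l, hword, hnd, hnotc, hunion, hdc⟩ := ih hlen2
    refine ⟨e :: l, ?_, ?_, ?_, ?_, ?_⟩
    · show walkWord lab (SimpleGraph.Walk.cons h w) = lab e :: l.map lab
      have : walkWord lab (SimpleGraph.Walk.cons h w) =
          stepLabel lab c.1 c₂.1 :: walkWord lab w := rfl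
      rw [this, stepLabel_extends lab he, hword]
    · rw [List.nodup_cons]
      refine ⟨?_, hnd⟩
      intro hel
      exact hnotc e hel (by rw [hc2]; exact Finset.mem_insert_self e c.1)
    · intro x hx
      rcases List.mem_cons.mp hx with rfl | hx
      · exact he.1
      · intro hxc
        exact hnotc x hx (by rw [hc2]; exact Finset.mem_insert_of_mem hxc)
    · rw [← hunion, hc2]
      ext x
      simp only [List.toFinset_cons, Finset.mem_union, Finset.mem_insert]
      tauto
    · intro n e₀ he₀ e' hle
      cases n with
      | zero =>
        simp only [List.take_zero, List.toFinset_nil, Finset.union_empty] at he₀ ⊢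
        exact c.2.1 e₀ he₀ e' hle
      | succ n =>
        have hset : c.1 ∪ ((e :: l).take (n + 1)).toFinset =
            c₂.1 ∪ (l.take n).toFinset := by
          rw [List.take_succ_cons, List.toFinset_cons, hc2]
          ext x
          simp only [Finset.mem_union, Finset.mem_insert]
          tauto
        rw [hset] at he₀ ⊢
        exact hdc n e₀ he₀ e' hle

end EventStructure

end Aux

/-- In an `M`-labeled event structure, any two shortest
`(v₀,v)`-paths of `G(E)` read `I`-equivalent words: `σ(π') ∈ ⟨σ(π)⟩`. -/
theorem stmt1 {E A : Type*} [Fintype A] [Nonempty A]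
    (ES : EventStructure E) (I : A → A → Prop)
    (hI_irrefl : ∀ a, ¬ I a a) (hI_symm : ∀ a b, I a b → I b a)
    (lab : E → A) (hlab : IsTraceLabeling ES I lab)
    (v : ES.Config)
    (p p' : ES.configGraph.Walk ES.emptyConfig v)
    (hp : p.length = ES.configGraph.dist ES.emptyConfig v)
    (hp' : p'.length = ES.configGraph.dist ES.emptyConfig v) :
    TraceEquiv I (walkWord lab p) (walkWord lab p') := by
  classical
  -- the distance from ∅ to v equals the cardinality of v
  obtain ⟨w, hw⟩ := EventStructure.exists_increasing_walk v.1.card v le_rfl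
  have hdist_le : ES.configGraph.dist ES.emptyConfig v ≤ v.1.card := by
    calc ES.configGraph.dist ES.emptyConfig v ≤ w.length := SimpleGraph.dist_le w
      _ = v.1.card := hw
  have hempty : (ES.emptyConfig).1.card = 0 := by
    simp [EventStructure.emptyConfig]
  have hlp : p.length = v.1.card := by
    have h1 := EventStructure.card_le_of_walk p
    rw [hempty] at h1
    omega
  have hlp' : p'.length = v.1.card := by
    have h1 := EventStructure.card_le_of_walk p'
    rw [hempty] at h1
    omega
  -- extract the event lists of the two geodesics
  obtain ⟨l, hword, hnd, _, hunion, hdc⟩ :=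
    EventStructure.walk_to_list lab p (by rw [hempty, hlp]; omega)
  obtain ⟨l', hword', hnd', _, hunion', hdc'⟩ :=
    EventStructure.walk_to_list lab p' (by rw [hempty, hlp']; omega)
  have hemptyset : (ES.emptyConfig).1 = (∅ : Finset E) := rfl
  rw [hemptyset, Finset.empty_union] at hunion hunion'
  have hdcpre : DCpre ES l := by
    intro n e he e' hle he'
    have := hdc n e (by rw [hemptyset, Finset.empty_union, List.mem_toFinset]; exact he)
      e' hle
    rw [hemptyset, Finset.empty_union, List.mem_toFinset] at this
    exact this
  have hdcpre' : DCpre ES l' := by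
    intro n e he e' hle he'
    have := hdc' n e (by rw [hemptyset, Finset.empty_union, List.mem_toFinset]; exact he)
      e' hle
    rw [hemptyset, Finset.empty_union, List.mem_toFinset] at this
    exact this
  have hconf : ∀ e ∈ v.1, ∀ e' ∈ v.1, ¬ ES.conflict e e' := v.2.2
  have := key_lemma ES I lab hlab.les3 l' l v.1 hconf hnd hnd' hunion hunion'
    hdcpre hdcpre'
  rw [hword, hword']
  exact this
end

section
/- In a directed median graph (G, o), every directed path is a shortest path of G: if (x_1, x_2, …, x_k) is a path of G in which each edge x_i x_{i+1} is oriented from x_i to x_{i+1}, then its length k−1 equals the graph distance d(x_1, x_k). -/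
section Aux

variable {V : Type*} {G : SimpleGraph V}

open SimpleGraph

private lemma median_exists (hG : IsMedianGraph G) (x y z : V) :
    ∃ m : V, G.dist x m + G.dist m y = G.dist x y ∧
      G.dist y m + G.dist m z = G.dist y z ∧
      G.dist z m + G.dist m x = G.dist z x := by
  obtain ⟨m, ⟨h1, h2, h3⟩, -⟩ := hG.2 x y z
  exact ⟨m, h1, h2, h3⟩

/-- Distances from any vertex to the two endpoints of an edge differ by exactly one. -/
private lemma parity (hG : IsMedianGraph G) (z : V) {a b : V} (hab : G.Adj a b) :
    G.dist z b = G.dist z a + 1 ∨ G.dist z a = G.dist z b + 1 := by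
  obtain ⟨m, h1, h2, h3⟩ := median_exists hG z a b
  have hab1 : G.dist a b = 1 := SimpleGraph.dist_eq_one_iff_adj.mpr hab
  rw [hab1] at h2
  rcases Nat.eq_zero_or_pos (G.dist a m) with h0 | hpos
  · -- m = a
    have cma : G.dist m a = G.dist a m := SimpleGraph.dist_comm
    have hma : m = a := hG.1.dist_eq_zero_iff.mp (by omega)
    subst hma
    left
    have cba : G.dist b m = G.dist m b := SimpleGraph.dist_comm
    have czb : G.dist z b = G.dist b z := SimpleGraph.dist_comm
    have czm : G.dist z m = G.dist m z := SimpleGraph.dist_comm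
    omega
  · -- dist a m = 1, dist m b = 0, m = b
    have hmb0 : G.dist m b = 0 := by omega
    have hmb : m = b := hG.1.dist_eq_zero_iff.mp hmb0
    subst hmb
    right
    have cma : G.dist m a = G.dist a m := SimpleGraph.dist_comm
    omega

private lemma tri_free (hG : IsMedianGraph G) {a b c : V}
    (h1 : G.Adj a b) (h2 : G.Adj b c) (h3 : G.Adj a c) : False := by
  have hp := parity hG c h1
  have e1 : G.dist c a = 1 := SimpleGraph.dist_eq_one_iff_adj.mpr h3.symm
  have e2 : G.dist c b = 1 := SimpleGraph.dist_eq_one_iff_adj.mpr h2.symm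
  omega

private lemma exists_step (hG : IsMedianGraph G) {a v : V} (h : G.dist v a ≠ 0) :
    ∃ a' : V, G.Adj a a' ∧ G.dist v a' + 1 = G.dist v a := by
  have h' : G.dist a v ≠ 0 := by rwa [SimpleGraph.dist_comm]
  obtain ⟨p, hp⟩ := SimpleGraph.exists_walk_of_dist_ne_zero h'
  cases p with
  | nil => simp at hp; simp at h'
  | @cons _ a' _ hadj q =>
    refine ⟨a', hadj, ?_⟩
    rw [SimpleGraph.Walk.length_cons] at hp
    have hle : G.dist a' v ≤ q.length := SimpleGraph.dist_le q
    have htri : G.dist v a ≤ G.dist v a' + G.dist a' a := hG.1.dist_triangle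
    have ha'a : G.dist a' a = 1 := SimpleGraph.dist_eq_one_iff_adj.mpr hadj.symm
    have hc1 : G.dist v a' = G.dist a' v := SimpleGraph.dist_comm
    have hc2 : G.dist v a = G.dist a v := SimpleGraph.dist_comm
    omega

/-- Key transport lemma: if `o a b` and the edge `uv` crosses the same split
in the opposite direction, then `o v u`. -/
private lemma key (hG : IsMedianGraph G) (o : V → V → Prop)
    (ho_adj : ∀ a b, o a b → G.Adj a b)
    (ho_square : ∀ a b c d, G.Adj a b → G.Adj c d → G.Adj a c → G.Adj b d →
      a ≠ d → b ≠ c → o a b → o c d) :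
    ∀ (n : ℕ) (a b u v : V), G.dist u b = n → o a b →
      G.dist u a = G.dist u b + 1 → G.dist v b = G.dist v a + 1 →
      G.Adj u v → o v u := by
  intro n
  induction n using Nat.strong_induction_on with
  | _ n ih =>
    intro a b u v hub hoab hua hvb huv
    have hconn := hG.1
    have hab : G.Adj a b := ho_adj _ _ hoab
    have hvu1 : G.dist v u = 1 := SimpleGraph.dist_eq_one_iff_adj.mpr huv.symm
    have htvb : G.dist v b ≤ G.dist v u + G.dist u b := hconn.dist_triangle
    have hva : G.dist v a = n := by
      have hp := parity hG a huv
      have c1 : G.dist a v = G.dist v a := SimpleGraph.dist_comm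
      have c2 : G.dist a u = G.dist u a := SimpleGraph.dist_comm
      omega
    rcases Nat.eq_zero_or_pos n with hn0 | hnpos
    · -- base case : u = b, v = a
      subst hn0
      have hub' : u = b := hconn.dist_eq_zero_iff.mp hub
      have hva' : v = a := hconn.dist_eq_zero_iff.mp hva
      subst hub'; subst hva'
      exact hoab
    · -- inductive step
      have hva_ne : G.dist v a ≠ 0 := by omega
      obtain ⟨a', haa', hva'⟩ := exists_step hG hva_ne
      -- dist v a' = n - 1
      have hua' : G.dist u a' = n := by
        have hp := parity hG u haa'
        have ht : G.dist u a' ≤ G.dist u v + G.dist v a' := hconn.dist_triangle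
        have huv1 : G.dist u v = 1 := SimpleGraph.dist_eq_one_iff_adj.mpr huv
        omega
      have ha'b_ne : a' ≠ b := by
        intro he; rw [he] at hva'; omega
      have ha'b2 : G.dist a' b = 2 := by
        have hle : G.dist a' b ≤ G.dist a' a + G.dist a b := hconn.dist_triangle
        have h1 : G.dist a' a = 1 := SimpleGraph.dist_eq_one_iff_adj.mpr haa'.symm
        have h2 : G.dist a b = 1 := SimpleGraph.dist_eq_one_iff_adj.mpr hab
        have hne0 : G.dist a' b ≠ 0 := fun h0 => ha'b_ne (hconn.dist_eq_zero_iff.mp h0)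
        have hne1 : G.dist a' b ≠ 1 := by
          intro h1'
          exact tri_free hG haa' (SimpleGraph.dist_eq_one_iff_adj.mp h1') hab
        omega
      obtain ⟨c, m1, m2, m3⟩ := median_exists hG u a' b
      rw [hua'] at m1
      rw [ha'b2] at m2
      have m3' : G.dist b u = n := by rw [SimpleGraph.dist_comm]; exact hub
      rw [m3'] at m3
      have c1 : G.dist c a' = G.dist a' c := SimpleGraph.dist_comm
      have c2 : G.dist b c = G.dist c b := SimpleGraph.dist_comm
      have c3 : G.dist c u = G.dist u c := SimpleGraph.dist_comm
      have hca' : G.dist a' c = 1 := by omega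
      have hcb : G.dist c b = 1 := by omega
      have huc : G.dist u c = n - 1 := by omega
      have hadj_a'c : G.Adj a' c := SimpleGraph.dist_eq_one_iff_adj.mp hca'
      have hadj_bc : G.Adj b c := (SimpleGraph.dist_eq_one_iff_adj.mp hcb).symm
      have hac_ne : a ≠ c := by
        intro he
        rw [← he] at huc
        omega
      have hoa'c : o a' c :=
        ho_square a b a' c hab hadj_a'c haa' hadj_bc hac_ne ha'b_ne.symm hoab
      -- dist v c = dist v a' + 1
      have hvc : G.dist v c = G.dist v a' + 1 := by
        have hp := parity hG v hadj_a'c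
        have ht : G.dist v b ≤ G.dist v c + G.dist c b := hconn.dist_triangle
        omega
      exact ih (n - 1) (by omega) a' c u v huc hoa'c (by omega) hvc huv

/-- Discrete intermediate value theorem along a directed walk. -/
private lemma ivt (hG : IsMedianGraph G) (o : V → V → Prop) {x x' : V}
    (hxx' : G.Adj x x') :
    ∀ {s t : V} (q : G.Walk s t), (∀ d ∈ q.darts, o d.toProd.1 d.toProd.2) →
      G.dist s x = G.dist s x' + 1 → G.dist t x' = G.dist t x + 1 →
      ∃ u v : V, G.Adj u v ∧ o u v ∧ G.dist u x = G.dist u x' + 1 ∧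
        G.dist v x' = G.dist v x + 1 := by
  intro s t q
  induction q with
  | nil =>
    intro _ h1 h2
    omega
  | @cons s s'' t hadj q ihq =>
    intro hdir h1 h2
    have hos : o s s'' := by
      have : (⟨(s, s''), hadj⟩ : G.Dart) ∈ (SimpleGraph.Walk.cons hadj q).darts := by
        rw [SimpleGraph.Walk.darts_cons]; exact List.mem_cons_self
      exact hdir _ this
    by_cases hcase : G.dist s'' x' = G.dist s'' x + 1
    · exact ⟨s, s'', hadj, hos, h1, hcase⟩
    · have hp := parity hG s'' hxx'
      have h1' : G.dist s'' x = G.dist s'' x' + 1 := by omega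
      have hdirq : ∀ d ∈ q.darts, o d.toProd.1 d.toProd.2 := fun d hd =>
        hdir d (by rw [SimpleGraph.Walk.darts_cons]; exact List.mem_cons_of_mem _ hd)
      exact ihq hdirq h1' h2

private lemma main_aux (hG : IsMedianGraph G) (o : V → V → Prop)
    (ho_adj : ∀ a b, o a b → G.Adj a b)
    (ho_antisymm : ∀ a b, o a b → ¬ o b a)
    (ho_square : ∀ a b c d, G.Adj a b → G.Adj c d → G.Adj a c → G.Adj b d →
      a ≠ d → b ≠ c → o a b → o c d) :
    ∀ {x y : V} (p : G.Walk x y), (∀ d ∈ p.darts, o d.toProd.1 d.toProd.2) →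
      p.length = G.dist x y := by
  intro x y p
  induction p with
  | nil => intro _; exact (SimpleGraph.dist_self).symm
  | @cons x x'' y hadj q ihq =>
    intro hdir
    have hdirq : ∀ d ∈ q.darts, o d.toProd.1 d.toProd.2 := fun d hd =>
      hdir d (by rw [SimpleGraph.Walk.darts_cons]; exact List.mem_cons_of_mem _ hd)
    have hq : q.length = G.dist x'' y := ihq hdirq
    have hox : o x x'' := by
      have : (⟨(x, x''), hadj⟩ : G.Dart) ∈ (SimpleGraph.Walk.cons hadj q).darts := by
        rw [SimpleGraph.Walk.darts_cons]; exact List.mem_cons_self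
      exact hdir _ this
    rw [SimpleGraph.Walk.length_cons]
    have hp := parity hG y hadj
    rcases hp with hbad | hgood
    · -- dist y x'' = dist y x + 1 : contradiction via key lemma
      exfalso
      have hs1 : G.dist x'' x = G.dist x'' x'' + 1 := by
        rw [SimpleGraph.dist_self, SimpleGraph.dist_eq_one_iff_adj]
        exact hadj.symm
      obtain ⟨u, v, huv, houv, hu, hv⟩ := ivt hG o hadj q hdirq hs1 hbad
      have hovu : o v u :=
        key hG o ho_adj ho_square (G.dist u x'') x x'' u v rfl hox hu hv huv
      exact ho_antisymm u v houv hovu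
    · -- dist y x = dist y x'' + 1
      have c1 : G.dist x y = G.dist y x := SimpleGraph.dist_comm
      have c2 : G.dist x'' y = G.dist y x'' := SimpleGraph.dist_comm
      omega

end Aux

/-- In a directed median graph (an orientation of the edges in
which opposite edges of every 4-cycle point the same way), every directed path
is a shortest path. -/
theorem stmt8 {V : Type*} (G : SimpleGraph V) (hG : IsMedianGraph G)
    (o : V → V → Prop)
    (ho_adj : ∀ a b, o a b → G.Adj a b)
    (ho_total : ∀ a b, G.Adj a b → o a b ∨ o b a)
    (ho_antisymm : ∀ a b, o a b → ¬ o b a)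
    (ho_square : ∀ a b c d, G.Adj a b → G.Adj c d → G.Adj a c → G.Adj b d →
      a ≠ d → b ≠ c → o a b → o c d)
    {x y : V} (p : G.Walk x y) (hpath : p.IsPath)
    (hdir : ∀ d ∈ p.darts, o d.toProd.1 d.toProd.2) :
    p.length = G.dist x y :=
  main_aux hG o ho_adj ho_antisymm ho_square p hdir
end

section
/- Let G be a median graph with basepoint v0, and let u and v be two vertices with d(v0,u) = d(v0,v) = k that are joined by a path of G all of whose vertices are at distance at least k from v0. Then there exists a (u,v)-path (u, p_1, q_1, p_2, q_2, …, p_{m-1}, q_{m-1}, p_m, v) in G such that d(v0, p_i) = k+1 for all i ∈ {1,…,m} and d(v0, q_i) = k for all i ∈ {1,…,m−1}. -/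
/-- In a median graph, adjacent vertices are at distances from `v0` differing
by exactly one. -/
private lemma median_adj_level {V : Type*} {G : SimpleGraph V} (hG : IsMedianGraph G)
    (v0 : V) {a b : V} (hab : G.Adj a b) :
    G.dist v0 a + 1 = G.dist v0 b ∨ G.dist v0 b + 1 = G.dist v0 a := by
  obtain ⟨hconn, hmed⟩ := hG
  have dc : ∀ p q : V, G.dist p q = G.dist q p := fun _ _ => SimpleGraph.dist_comm
  obtain ⟨m, ⟨h1, h2, h3⟩, -⟩ := hmed a b v0
  simp only [mInterval, Set.mem_setOf_eq] at h1 h2 h3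
  have hd : G.dist a b = 1 := SimpleGraph.dist_eq_one_iff_adj.mpr hab
  rw [hd] at h1
  rcases Nat.eq_zero_or_pos (G.dist a m) with h0 | hpos
  · have hma : a = m := hconn.dist_eq_zero_iff.mp h0
    subst hma
    left
    have e1 := dc a b
    have e2 := dc a v0
    have e3 := dc b v0
    have e4 := dc b a
    omega
  · have h0' : G.dist m b = 0 := by omega
    have hmb : m = b := hconn.dist_eq_zero_iff.mp h0'
    subst hmb
    right
    have e1 := dc a m
    have e2 := dc m a
    have e3 := dc v0 a
    have e4 := dc v0 m
    omega

/-- The local replacement step: a local maximum `x` with distinct neighbours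
`a b` one level below can be replaced by a common neighbour `m` one level
below `a` and `b`. -/
private lemma median_step {V : Type*} {G : SimpleGraph V} (hG : IsMedianGraph G)
    (v0 : V) {a x b : V} (hax : G.Adj a x) (hxb : G.Adj x b) (hne : a ≠ b)
    (hla : G.dist v0 a + 1 = G.dist v0 x) (hlb : G.dist v0 b + 1 = G.dist v0 x) :
    ∃ m : V, G.Adj a m ∧ G.Adj m b ∧ G.dist v0 m + 1 = G.dist v0 a := by
  obtain ⟨hconn, hmed⟩ := hG
  have dc : ∀ p q : V, G.dist p q = G.dist q p := fun _ _ => SimpleGraph.dist_comm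
  have hab2 : G.dist a b = 2 := by
    have hle : G.dist a b ≤ 2 := by
      have := hconn.dist_triangle (u := a) (v := x) (w := b)
      have h1 : G.dist a x = 1 := SimpleGraph.dist_eq_one_iff_adj.mpr hax
      have h2 : G.dist x b = 1 := SimpleGraph.dist_eq_one_iff_adj.mpr hxb
      omega
    have hne0 : G.dist a b ≠ 0 := fun h => hne (hconn.dist_eq_zero_iff.mp h)
    have hne1 : G.dist a b ≠ 1 := by
      intro h
      have hadj : G.Adj a b := SimpleGraph.dist_eq_one_iff_adj.mp h
      rcases median_adj_level ⟨hconn, hmed⟩ v0 hadj with h' | h' <;> omega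
    omega
  obtain ⟨m, ⟨h1, h2, h3⟩, -⟩ := hmed a b v0
  simp only [mInterval, Set.mem_setOf_eq] at h1 h2 h3
  rw [hab2] at h1
  have hma : G.dist a m ≠ 0 := by
    intro h0
    have hea : a = m := hconn.dist_eq_zero_iff.mp h0
    subst hea
    have e1 := dc a b
    have e2 := dc b a
    have e3 := dc a v0
    have e4 := dc b v0
    omega
  have hmb : G.dist m b ≠ 0 := by
    intro h0
    have heb : m = b := hconn.dist_eq_zero_iff.mp h0
    subst heb
    have e1 := dc a m
    have e2 := dc m a
    have e3 := dc v0 a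
    have e4 := dc v0 m
    omega
  have ham : G.dist a m = 1 := by omega
  have hmb1 : G.dist m b = 1 := by omega
  refine ⟨m, SimpleGraph.dist_eq_one_iff_adj.mp ham, SimpleGraph.dist_eq_one_iff_adj.mp hmb1, ?_⟩
  have e1 := dc m a
  omega

/-- The flattening lemma: any walk between two vertices at level `k` staying
at levels `≥ k` can be replaced by a walk staying at levels in `{k, k+1}`. -/
private lemma flatten {V : Type*} {G : SimpleGraph V} (hG : IsMedianGraph G)
    (v0 : V) (k : ℕ) :
    ∀ (n : ℕ) {u v : V} (p : G.Walk u v),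
      (p.support.map (G.dist v0)).sum ≤ n →
      G.dist v0 u = k → G.dist v0 v = k →
      (∀ x ∈ p.support, k ≤ G.dist v0 x) →
      ∃ w : G.Walk u v, ∀ x ∈ w.support, k ≤ G.dist v0 x ∧ G.dist v0 x ≤ k + 1 := by
  intro n
  induction n with
  | zero =>
    intro u v p hm hu hv hsup
    refine ⟨p, fun x hx => ⟨hsup x hx, ?_⟩⟩
    have : G.dist v0 x ≤ (p.support.map (G.dist v0)).sum :=
      List.single_le_sum (fun _ _ => Nat.zero_le _) _ (List.mem_map_of_mem hx)
    omega
  | succ n ih =>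
    intro u v p hm hu hv hsup
    classical
    by_cases hall : ∀ x ∈ p.support, G.dist v0 x ≤ k + 1
    · exact ⟨p, fun x hx => ⟨hsup x hx, hall x hx⟩⟩
    push_neg at hall
    obtain ⟨y, hy, hky⟩ := hall
    have hne : p.support.toFinset.Nonempty := ⟨u, by simp⟩
    obtain ⟨x, hxf, hmax'⟩ := p.support.toFinset.exists_max_image (G.dist v0) hne
    have hxmem : x ∈ p.support := List.mem_toFinset.mp hxf
    have hmax : ∀ z ∈ p.support, G.dist v0 z ≤ G.dist v0 x := fun z hz =>
      hmax' z (List.mem_toFinset.mpr hz)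
    have hxbig : k + 2 ≤ G.dist v0 x := by
      have := hmax y hy
      omega
    have hxu : x ≠ u := by rintro rfl; omega
    have hxv : x ≠ v := by rintro rfl; omega
    obtain ⟨q, r, rfl⟩ := SimpleGraph.Walk.mem_support_iff_exists_append.mp hxmem
    -- decompose r as cons
    obtain ⟨b, hxb, r', rfl⟩ := SimpleGraph.Walk.exists_eq_cons_of_ne hxv r
    -- decompose q from the end, via its reverse
    obtain ⟨a, hxa, q₃, hq3⟩ := SimpleGraph.Walk.exists_eq_cons_of_ne hxu q.reverse
    have hq : q = q₃.reverse.concat hxa.symm := by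
      have := congrArg SimpleGraph.Walk.reverse hq3
      rwa [SimpleGraph.Walk.reverse_reverse, SimpleGraph.Walk.reverse_cons] at this
    subst hq
    have hsupp : ((q₃.reverse.concat hxa.symm).append (SimpleGraph.Walk.cons hxb r')).support
        = q₃.reverse.support ++ x :: r'.support := by
      rw [SimpleGraph.Walk.support_append, SimpleGraph.Walk.support_concat]
      simp
    have hamem : a ∈ ((q₃.reverse.concat hxa.symm).append
        (SimpleGraph.Walk.cons hxb r')).support := by
      rw [hsupp]
      exact List.mem_append_left _ (SimpleGraph.Walk.end_mem_support q₃.reverse)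
    have hbmem : b ∈ ((q₃.reverse.concat hxa.symm).append
        (SimpleGraph.Walk.cons hxb r')).support := by
      rw [hsupp]
      exact List.mem_append_right _ (List.mem_cons_of_mem _ (SimpleGraph.Walk.start_mem_support r'))
    have hla : G.dist v0 a + 1 = G.dist v0 x := by
      rcases median_adj_level hG v0 hxa.symm with h | h
      · exact h
      · have := hmax a hamem; omega
    have hlb : G.dist v0 b + 1 = G.dist v0 x := by
      rcases median_adj_level hG v0 hxb with h | h
      · have := hmax b hbmem; omega
      · exact h
    have hmeq : (((q₃.reverse.concat hxa.symm).append
          (SimpleGraph.Walk.cons hxb r')).support.map (G.dist v0)).sum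
        = (q₃.reverse.support.map (G.dist v0)).sum + G.dist v0 x
            + (r'.support.map (G.dist v0)).sum := by
      rw [hsupp]
      simp [List.sum_append]
      ring
    by_cases hab : a = b
    · -- shortcut: drop x and b
      subst hab
      set w₀ : G.Walk u v := q₃.reverse.append r' with hw₀
      have hsub : ∀ z ∈ w₀.support, z ∈ ((q₃.reverse.concat hxa.symm).append
          (SimpleGraph.Walk.cons hxb r')).support := by
        intro z hz
        rw [hw₀, SimpleGraph.Walk.mem_support_append_iff] at hz
        rw [hsupp]
        rcases hz with hz | hz
        · exact List.mem_append_left _ hz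
        · exact List.mem_append_right _ (List.mem_cons_of_mem _ hz)
      apply ih w₀ ?_ hu hv (fun z hz => hsup z (hsub z hz))
      -- measure bound
      have hsupp₀ : w₀.support = q₃.reverse.support ++ r'.support.tail :=
        SimpleGraph.Walk.support_append _ _
      have hr' : r'.support = a :: r'.support.tail :=
        (SimpleGraph.Walk.support_eq_cons r')
      have hmeq₀ : (w₀.support.map (G.dist v0)).sum
          = (q₃.reverse.support.map (G.dist v0)).sum
              + (r'.support.tail.map (G.dist v0)).sum := by
        rw [hsupp₀]; simp [List.sum_append]
      have hrsum : (r'.support.map (G.dist v0)).sum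
          = G.dist v0 a + (r'.support.tail.map (G.dist v0)).sum := by
        conv_lhs => rw [hr']
        simp only [List.map_cons, List.sum_cons]
      omega
    · -- replace x by a median m of a, b, v0
      obtain ⟨m, ham, hmb, hlm⟩ := median_step hG v0 hxa.symm hxb hab hla hlb
      set w₀ : G.Walk u v :=
        q₃.reverse.append (SimpleGraph.Walk.cons ham (SimpleGraph.Walk.cons hmb r')) with hw₀
      have hsupp₀ : w₀.support = q₃.reverse.support ++ m :: r'.support := by
        rw [hw₀, SimpleGraph.Walk.support_append]
        simp
      have hsub : ∀ z ∈ w₀.support, z = m ∨ z ∈ ((q₃.reverse.concat hxa.symm).append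
          (SimpleGraph.Walk.cons hxb r')).support := by
        intro z hz
        rw [hsupp₀] at hz
        rw [hsupp]
        rcases List.mem_append.mp hz with hz | hz
        · exact Or.inr (List.mem_append_left _ hz)
        · rcases List.mem_cons.mp hz with rfl | hz
          · exact Or.inl rfl
          · exact Or.inr (List.mem_append_right _ (List.mem_cons_of_mem _ hz))
      apply ih w₀ ?_ hu hv ?_
      · -- measure bound
        have hmeq₀ : (w₀.support.map (G.dist v0)).sum
            = (q₃.reverse.support.map (G.dist v0)).sum + G.dist v0 m
                + (r'.support.map (G.dist v0)).sum := by
          rw [hsupp₀]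
          simp [List.sum_append]
          ring
        omega
      · intro z hz
        rcases hsub z hz with rfl | hz'
        · omega
        · exact hsup z hz'

/-- In a median graph, if `u` and `v` lie at distance `k`
from `v₀` and are joined by a path avoiding the ball of radius `k - 1`, then
they are joined by a zigzag path alternating between the spheres of radii
`k + 1` and `k`. -/
theorem stmt14 {V : Type*} (G : SimpleGraph V) (hG : IsMedianGraph G)
    (v0 u v : V) (k : ℕ)
    (hu : G.dist v0 u = k) (hv : G.dist v0 v = k)
    (p : G.Walk u v) (hp : p.IsPath)
    (hsup : ∀ x ∈ p.support, k ≤ G.dist v0 x) :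
    ∃ (m : ℕ) (w : G.Walk u v), w.IsPath ∧ w.length = 2 * m ∧
      (∀ i < m, G.dist v0 (w.getVert (2 * i + 1)) = k + 1) ∧
      ∀ i, 0 < i → i < m → G.dist v0 (w.getVert (2 * i)) = k := by
  classical
  obtain ⟨w, hw⟩ := flatten hG v0 k (p.support.map (G.dist v0)).sum p le_rfl hu hv hsup
  set q := w.bypass with hqdef
  have hqsup : ∀ x ∈ q.support, k ≤ G.dist v0 x ∧ G.dist v0 x ≤ k + 1 := fun x hx =>
    hw x (SimpleGraph.Walk.support_bypass_subset w hx)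
  have claim : ∀ i, i ≤ q.length → G.dist v0 (q.getVert i) = k + i % 2 := by
    intro i
    induction i with
    | zero => intro _; simpa [SimpleGraph.Walk.getVert_zero]
    | succ i ihc =>
      intro hle
      have hi := ihc (by omega)
      have hadj : G.Adj (q.getVert i) (q.getVert (i + 1)) :=
        q.adj_getVert_succ (by omega)
      have hmem : q.getVert (i + 1) ∈ q.support :=
        SimpleGraph.Walk.mem_support_iff_exists_getVert.mpr ⟨i + 1, rfl, hle⟩
      obtain ⟨h1, h2⟩ := hqsup _ hmem
      rcases median_adj_level hG v0 hadj with h | h <;> omega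
  have hlast : G.dist v0 (q.getVert q.length) = k := by
    rw [SimpleGraph.Walk.getVert_length]; exact hv
  have heven : q.length % 2 = 0 := by
    have := claim q.length le_rfl
    omega
  refine ⟨q.length / 2, q, w.bypass_isPath, by omega, ?_, ?_⟩
  · intro i hi
    have := claim (2 * i + 1) (by omega)
    omega
  · intro i h0 hi
    have := claim (2 * i) (by omega)
    omega
end

section
/- Let G be a median graph and let C be a finite nonempty set of vertices of G with |C| = K such that d(x,y) ≤ D for all x, y ∈ C. Then the convex hull of C has diameter at most D·K², i.e., d(x,y) ≤ D·K² for all vertices x, y in the convex hull of C. -/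
/-- A convex set of vertices: closed under metric intervals. -/
abbrev GraphConvex {V : Type*} (G : SimpleGraph V) (s : Set V) : Prop :=
  ∀ x ∈ s, ∀ y ∈ s, ∀ z, z ∈ mInterval G x y → z ∈ s

/-- The convex hull of a set of vertices. -/
abbrev graphConvexHull {V : Type*} (G : SimpleGraph V) (C : Set V) : Set V :=
  ⋂₀ {s : Set V | GraphConvex G s ∧ C ⊆ s}

namespace Stmt15Aux

variable {V : Type*} {G : SimpleGraph V}

/-- `z` lies (geodesically) between `a` and `b`. -/
def Btw (G : SimpleGraph V) (a z b : V) : Prop :=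
  G.dist a z + G.dist z b = G.dist a b

/-- `m` is a median of the triple `x, y, z`. -/
def IsMed (G : SimpleGraph V) (m x y z : V) : Prop :=
  Btw G x m y ∧ Btw G y m z ∧ Btw G z m x

lemma btw_self_left (a b : V) : Btw G a a b := by
  show G.dist a a + G.dist a b = G.dist a b
  simp [SimpleGraph.dist_self]

lemma btw_self_right (a b : V) : Btw G a b b := by
  show G.dist a b + G.dist b b = G.dist a b
  simp [SimpleGraph.dist_self]

lemma btw_comm {a z b : V} (h : Btw G a z b) : Btw G b z a := by
  have h' : G.dist a z + G.dist z b = G.dist a b := h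
  have c1 : G.dist b z = G.dist z b := SimpleGraph.dist_comm
  have c2 : G.dist z a = G.dist a z := SimpleGraph.dist_comm
  have c3 : G.dist b a = G.dist a b := SimpleGraph.dist_comm
  show G.dist b z + G.dist z a = G.dist b a
  omega

section Connected

variable (hc : G.Connected)

include hc

lemma tri (a b c : V) : G.dist a c ≤ G.dist a b + G.dist b c :=
  hc.dist_triangle

lemma eq_of_dist_eq_zero {a b : V} (h : G.dist a b = 0) : a = b :=
  (hc.dist_eq_zero_iff).mp h

lemma one_le_dist_of_ne {a b : V} (h : a ≠ b) : 1 ≤ G.dist a b :=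
  hc.pos_dist_of_ne h

/-- If `m ∈ I(a,z)` and `z ∈ I(a,p)` then `z ∈ I(m,p)`. -/
lemma btw_trans₁ {a m z p : V} (h1 : Btw G a m z) (h2 : Btw G a z p) : Btw G m z p := by
  have e1 : G.dist a m + G.dist m z = G.dist a z := h1
  have e2 : G.dist a z + G.dist z p = G.dist a p := h2
  have t1 : G.dist a p ≤ G.dist a m + G.dist m p := tri hc a m p
  have t2 : G.dist m p ≤ G.dist m z + G.dist z p := tri hc m z p
  show G.dist m z + G.dist z p = G.dist m p
  omega

/-- If `w ∈ I(a,b)` and `t ∈ I(a,w)` then `t ∈ I(a,b)`. -/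
lemma btw_init {a w b t : V} (h1 : Btw G a w b) (h2 : Btw G a t w) : Btw G a t b := by
  have e1 : G.dist a w + G.dist w b = G.dist a b := h1
  have e2 : G.dist a t + G.dist t w = G.dist a w := h2
  have t1 : G.dist t b ≤ G.dist t w + G.dist w b := tri hc t w b
  have t2 : G.dist a b ≤ G.dist a t + G.dist t b := tri hc a t b
  show G.dist a t + G.dist t b = G.dist a b
  omega

/-- If `u ∈ I(a,p)` and `w ∈ I(u,p)` then `w ∈ I(a,p)`. -/
lemma btw_mid {a u p w : V} (h1 : Btw G a u p) (h2 : Btw G u w p) : Btw G a w p := by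
  have e1 : G.dist a u + G.dist u p = G.dist a p := h1
  have e2 : G.dist u w + G.dist w p = G.dist u p := h2
  have t1 : G.dist a w ≤ G.dist a u + G.dist u w := tri hc a u w
  have t2 : G.dist a p ≤ G.dist a w + G.dist w p := tri hc a w p
  show G.dist a w + G.dist w p = G.dist a p
  omega

/-- If `z ∈ I(u,v)` and `u₂ ∈ I(z,u)` then `z ∈ I(u₂,v)`. -/
lemma btw_replace_left {u z v u₂ : V} (h1 : Btw G u z v) (h2 : Btw G z u₂ u) :
    Btw G u₂ z v := by
  have e1 : G.dist u z + G.dist z v = G.dist u v := h1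
  have e2 : G.dist z u₂ + G.dist u₂ u = G.dist z u := h2
  have t1 : G.dist u v ≤ G.dist u u₂ + G.dist u₂ v := tri hc u u₂ v
  have t2 : G.dist u₂ v ≤ G.dist u₂ z + G.dist z v := tri hc u₂ z v
  have c1 : G.dist u z = G.dist z u := SimpleGraph.dist_comm
  have c2 : G.dist u₂ z = G.dist z u₂ := SimpleGraph.dist_comm
  have c3 : G.dist u u₂ = G.dist u₂ u := SimpleGraph.dist_comm
  show G.dist u₂ z + G.dist z v = G.dist u₂ v
  omega

/-- If `z ∈ I(u,v)` and `v₂ ∈ I(z,v)` then `z ∈ I(u,v₂)`. -/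
lemma btw_replace_right {u z v v₂ : V} (h1 : Btw G u z v) (h2 : Btw G z v₂ v) :
    Btw G u z v₂ := by
  have e1 : G.dist u z + G.dist z v = G.dist u v := h1
  have e2 : G.dist z v₂ + G.dist v₂ v = G.dist z v := h2
  have t1 : G.dist u v ≤ G.dist u v₂ + G.dist v₂ v := tri hc u v₂ v
  have t2 : G.dist u v₂ ≤ G.dist u z + G.dist z v₂ := tri hc u z v₂
  show G.dist u z + G.dist z v₂ = G.dist u v₂
  omega

/-- Two points of an interval `I(w,a)` are at distance at most `d(w,a)`. -/
lemma int_diam {w a v m : V} (h1 : Btw G w v a) (h2 : Btw G w m a) :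
    G.dist v m ≤ G.dist w a := by
  have e1 : G.dist w v + G.dist v a = G.dist w a := h1
  have e2 : G.dist w m + G.dist m a = G.dist w a := h2
  have t1 : G.dist v m ≤ G.dist v w + G.dist w m := tri hc v w m
  have t2 : G.dist v m ≤ G.dist v a + G.dist a m := tri hc v a m
  have c1 : G.dist v w = G.dist w v := SimpleGraph.dist_comm
  have c2 : G.dist a m = G.dist m a := SimpleGraph.dist_comm
  omega

/-- A neighbour of `z` on a geodesic from `z` to `m`. -/
lemma exists_step {z m : V} (h : G.dist z m ≠ 0) :
    ∃ z' : V, G.dist z z' = 1 ∧ G.dist z' m + 1 = G.dist z m := by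
  obtain ⟨p, hp⟩ := SimpleGraph.exists_walk_of_dist_ne_zero h
  cases p with
  | nil =>
    simp only [SimpleGraph.Walk.length_nil] at hp
    omega
  | @cons _ b _ hadj q =>
    refine ⟨b, SimpleGraph.dist_eq_one_iff_adj.mpr hadj, ?_⟩
    have h1 : G.dist b m ≤ q.length := SimpleGraph.dist_le q
    have h2 : G.dist z m ≤ G.dist z b + G.dist b m := tri hc z b m
    have h3 : G.dist z b = 1 := SimpleGraph.dist_eq_one_iff_adj.mpr hadj
    simp only [SimpleGraph.Walk.length_cons] at hp
    omega

end Connected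

section Median

variable (hc : G.Connected) (hm : ∀ x y z : V, ∃! m : V, IsMed G m x y z)

include hc hm

/-- Core case of the gate property: an impossible local configuration. -/
lemma core {x y z m : V} (hmed : IsMed G m x y z) (hzm : G.dist z m = 1) :
    ∀ (B : ℕ) (w : V), Btw G x w y → G.dist w z ≤ B →
      G.dist w m = G.dist w z + 1 → False := by
  intro B
  induction B with
  | zero =>
    intro w hw hle heq
    have hwz : w = z := eq_of_dist_eq_zero hc (by omega)
    subst hwz
    have hmw : IsMed G w x y w := ⟨hw, btw_self_right y w, btw_self_left w x⟩
    have := (hm x y w).unique hmw hmed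
    have hd : G.dist w m = 0 := by rw [← this]; exact SimpleGraph.dist_self
    omega
  | succ B ih =>
    intro w hw hle heq
    by_cases hwB : G.dist w z ≤ B
    · exact ih w hw hwB heq
    have hwz : G.dist w z = B + 1 := by omega
    obtain ⟨g, hg⟩ := (hm w z x).exists
    by_cases hgw : g = w
    · obtain ⟨h', hh⟩ := (hm w z y).exists
      by_cases hhw : h' = w
      · -- then w is a median of (x,y,z), contradicting uniqueness
        have b1 : Btw G z w y := hhw ▸ hh.2.1
        have b2 : Btw G z w x := hgw ▸ hg.2.1
        have hmw : IsMed G w x y z := ⟨hw, btw_comm b1, b2⟩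
        have := (hm x y z).unique hmw hmed
        have hd : G.dist w m = 0 := by rw [← this]; exact SimpleGraph.dist_self
        omega
      · -- recurse via h'
        have hwhz : G.dist w h' + G.dist h' z = G.dist w z := hh.1
        have hne : 1 ≤ G.dist w h' := by
          have : w ≠ h' := fun e => hhw e.symm
          exact one_le_dist_of_ne hc this
        have hxy : Btw G x h' y := by
          have := btw_init hc (btw_comm hw) hh.2.2
          exact btw_comm this
        have hdm : G.dist h' m = G.dist h' z + 1 := by
          have t1 : G.dist w m ≤ G.dist w h' + G.dist h' m := tri hc w h' m
          have t2 : G.dist h' m ≤ G.dist h' z + G.dist z m := tri hc h' z m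
          omega
        exact ih h' hxy (by omega) hdm
    · -- recurse via g
      have hwgz : G.dist w g + G.dist g z = G.dist w z := hg.1
      have hne : 1 ≤ G.dist w g := by
        have : w ≠ g := fun e => hgw e.symm
        exact one_le_dist_of_ne hc this
      have hxy : Btw G x g y := btw_init hc hw hg.2.2
      have hdm : G.dist g m = G.dist g z + 1 := by
        have t1 : G.dist w m ≤ G.dist w g + G.dist g m := tri hc w g m
        have t2 : G.dist g m ≤ G.dist g z + G.dist z m := tri hc g z m
        omega
      exact ih g hxy (by omega) hdm

/-- The gate property: in a median graph, the median `m` of `x, y, z` lies on a geodesic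
from `z` to any point `w` of `I(x,y)`. -/
lemma gp : ∀ (A : ℕ) {z w x y m : V}, IsMed G m x y z → Btw G x w y →
    G.dist z m ≤ A → G.dist z w = G.dist z m + G.dist m w := by
  intro A
  induction A with
  | zero =>
    intro z w x y m hmed hw hle
    have hzm : z = m := eq_of_dist_eq_zero hc (by omega)
    subst hzm
    simp [SimpleGraph.dist_self]
  | succ A ih =>
    intro z w x y m hmed hw hle
    by_cases hA : G.dist z m ≤ A
    · exact ih hmed hw hA
    have hzm : G.dist z m = A + 1 := by omega
    obtain ⟨n, hn⟩ := (hm z w m).exists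
    -- hn : Btw z n w ∧ Btw w n m ∧ Btw m n z
    by_cases hnz : n = z
    · -- z ∈ I(w, m)
      have hzwm : G.dist w z + G.dist z m = G.dist w m := hnz ▸ hn.2.1
      by_cases hA1 : G.dist z m = 1
      · exact (core hc hm hmed hA1 (G.dist w z) w hw le_rfl (by omega)).elim
      · -- d z m ≥ 2 : contradiction via a neighbour step
        obtain ⟨z', hzz', hz'm⟩ := exists_step hc (z := z) (m := m) (by omega)
        have hmed' : IsMed G m x y z' := by
          refine ⟨hmed.1, ?_, ?_⟩
          · have e1 : G.dist y m + G.dist m z = G.dist y z := hmed.2.1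
            have t1 : G.dist y z ≤ G.dist y z' + G.dist z' z := tri hc y z' z
            have t2 : G.dist y z' ≤ G.dist y m + G.dist m z' := tri hc y m z'
            have c1 : G.dist m z' = G.dist z' m := SimpleGraph.dist_comm
            have c2 : G.dist z' z = G.dist z z' := SimpleGraph.dist_comm
            have c3 : G.dist m z = G.dist z m := SimpleGraph.dist_comm
            show G.dist y m + G.dist m z' = G.dist y z'
            omega
          · have e1 : G.dist z m + G.dist m x = G.dist z x := hmed.2.2
            have t1 : G.dist z x ≤ G.dist z z' + G.dist z' x := tri hc z z' x
            have t2 : G.dist z' x ≤ G.dist z' m + G.dist m x := tri hc z' m x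
            show G.dist z' m + G.dist m x = G.dist z' x
            omega
        have ihz' := ih hmed' hw (by omega)
        -- derive a contradiction
        have t1 : G.dist w z' ≤ G.dist w z + G.dist z z' := tri hc w z z'
        have t2 : G.dist w m ≤ G.dist w z' + G.dist z' m := tri hc w z' m
        have c1 : G.dist z' w = G.dist w z' := SimpleGraph.dist_comm
        have c2 : G.dist m w = G.dist w m := SimpleGraph.dist_comm
        omega
    · -- recurse via n
      have e1 : G.dist m n + G.dist n z = G.dist m z := hn.2.2
      have hne : 1 ≤ G.dist n z := by
        have : n ≠ z := hnz
        have := one_le_dist_of_ne hc this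
        omega
      have hmed'' : IsMed G m x y n := by
        refine ⟨hmed.1, ?_, ?_⟩
        · have e2 : G.dist y m + G.dist m z = G.dist y z := hmed.2.1
          have t1 : G.dist y z ≤ G.dist y n + G.dist n z := tri hc y n z
          have t2 : G.dist y n ≤ G.dist y m + G.dist m n := tri hc y m n
          show G.dist y m + G.dist m n = G.dist y n
          omega
        · have e2 : G.dist z m + G.dist m x = G.dist z x := hmed.2.2
          have t1 : G.dist z x ≤ G.dist z n + G.dist n x := tri hc z n x
          have t2 : G.dist n x ≤ G.dist n m + G.dist m x := tri hc n m x
          have c1 : G.dist n m = G.dist m n := SimpleGraph.dist_comm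
          have c2 : G.dist z n = G.dist n z := SimpleGraph.dist_comm
          have c3 : G.dist m z = G.dist z m := SimpleGraph.dist_comm
          show G.dist n m + G.dist m x = G.dist n x
          omega
      have hnm : G.dist n m ≤ A := by
        have c1 : G.dist n m = G.dist m n := SimpleGraph.dist_comm
        have c3 : G.dist m z = G.dist z m := SimpleGraph.dist_comm
        omega
      have ihn := ih hmed'' hw hnm
      have e3 : G.dist z n + G.dist n w = G.dist z w := hn.1
      have c1 : G.dist n m = G.dist m n := SimpleGraph.dist_comm
      have c2 : G.dist z n = G.dist n z := SimpleGraph.dist_comm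
      have c3 : G.dist m z = G.dist z m := SimpleGraph.dist_comm
      omega

/-- The "star" lemma: if `q ∈ I(z,a) ∩ I(z,p)` and `u` is the median of `(a,p,z)`,
then `q ∈ I(z,u)`. -/
lemma star {z q a p u : V} (hu : IsMed G u a p z)
    (hqa : Btw G z q a) (hqp : Btw G z q p) : Btw G z q u := by
  obtain ⟨uq, huq⟩ := (hm a p q).exists
  -- huq : Btw a uq p ∧ Btw p uq q ∧ Btw q uq a
  have E3 := gp hc hm (G.dist z u) hu (btw_self_left a p) le_rfl
  have E5 := gp hc hm (G.dist z u) hu (btw_self_right a p) le_rfl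
  have E1 := gp hc hm (G.dist z u) hu huq.1 le_rfl
  have E2 := gp hc hm (G.dist q uq) huq (btw_self_left a p) le_rfl
  have E4 := gp hc hm (G.dist q uq) huq (btw_self_right a p) le_rfl
  have H2 : G.dist z q + G.dist q a = G.dist z a := hqa
  have H4 : G.dist z q + G.dist q p = G.dist z p := hqp
  have Iu : G.dist a u + G.dist u p = G.dist a p := hu.1
  have Iuq : G.dist a uq + G.dist uq p = G.dist a p := huq.1
  have T : G.dist z uq ≤ G.dist z q + G.dist q uq := tri hc z q uq
  have cu : G.dist a u = G.dist u a := SimpleGraph.dist_comm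
  have cuq : G.dist a uq = G.dist uq a := SimpleGraph.dist_comm
  have h0 : G.dist u uq = 0 := by omega
  have huuq : u = uq := eq_of_dist_eq_zero hc h0
  subst huuq
  show G.dist z q + G.dist q u = G.dist z u
  omega

/-- The canonical case of the join-hull commutativity lemma. -/
lemma can {a b p z u v : V} (hu : IsMed G u a p z) (hv : IsMed G v b p z)
    (hz : Btw G u z v) : ∃ c : V, Btw G a c b ∧ Btw G c z p := by
  obtain ⟨c, hcm⟩ := (hm a b z).exists
  -- hcm : Btw a c b ∧ Btw b c z ∧ Btw z c a
  obtain ⟨q, hqm⟩ := (hm c p z).exists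
  -- hqm : Btw c q p ∧ Btw p q z ∧ Btw z q c
  have hqa : Btw G z q a := btw_init hc hcm.2.2 hqm.2.2
  have hqb : Btw G z q b := btw_init hc (btw_comm hcm.2.1) hqm.2.2
  have hqp : Btw G z q p := btw_comm hqm.2.1
  have hqu := star hc hm hu hqa hqp
  have hqv := star hc hm hv hqb hqp
  have e1 : G.dist u z + G.dist z v = G.dist u v := hz
  have e2 : G.dist z q + G.dist q u = G.dist z u := hqu
  have e3 : G.dist z q + G.dist q v = G.dist z v := hqv
  have t1 : G.dist u v ≤ G.dist u q + G.dist q v := tri hc u q v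
  have c1 : G.dist u z = G.dist z u := SimpleGraph.dist_comm
  have c2 : G.dist u q = G.dist q u := SimpleGraph.dist_comm
  have hq0 : G.dist z q = 0 := by omega
  have hzq : z = q := eq_of_dist_eq_zero hc hq0
  refine ⟨c, hcm.1, ?_⟩
  rw [hzq]
  exact hqm.1

/-- The main lemma towards join-hull commutativity. -/
lemma cl (p : V) : ∀ (μ : ℕ) {a b u v z : V},
    G.dist u z + G.dist z v ≤ μ → Btw G a u p → Btw G b v p → Btw G u z v →
    ∃ c : V, Btw G a c b ∧ Btw G c z p := by
  intro μ
  induction μ with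
  | zero =>
    intro a b u v z hμ hau hbv huv
    have : u = z := eq_of_dist_eq_zero hc (by omega)
    subst this
    obtain ⟨c, hcm⟩ := (hm a b u).exists
    exact ⟨c, hcm.1, btw_trans₁ hc (btw_comm hcm.2.2) hau⟩
  | succ μ ih =>
    intro a b u v z hμ hau hbv huv
    by_cases hle : G.dist u z + G.dist z v ≤ μ
    · exact ih hle hau hbv huv
    obtain ⟨u₁, hu₁⟩ := (hm u p z).exists
    -- hu₁ : Btw u u₁ p ∧ Btw p u₁ z ∧ Btw z u₁ u
    by_cases h1 : u₁ = u
    · obtain ⟨u₂, hu₂⟩ := (hm a z u).exists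
      -- hu₂ : Btw a u₂ z ∧ Btw z u₂ u ∧ Btw u u₂ a
      by_cases h2 : u₂ = u
      · obtain ⟨v₁, hv₁⟩ := (hm v p z).exists
        -- hv₁ : Btw v v₁ p ∧ Btw p v₁ z ∧ Btw z v₁ v
        by_cases h3 : v₁ = v
        · obtain ⟨v₂, hv₂⟩ := (hm b z v).exists
          -- hv₂ : Btw b v₂ z ∧ Btw z v₂ v ∧ Btw v v₂ b
          by_cases h4 : v₂ = v
          · -- canonical configuration
            have hum : IsMed G u a p z := ⟨hau, h1 ▸ hu₁.2.1, btw_comm (h2 ▸ hu₂.1)⟩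
            have hvm : IsMed G v b p z := ⟨hbv, h3 ▸ hv₁.2.1, btw_comm (h4 ▸ hv₂.1)⟩
            exact can hc hm hum hvm huv
          · -- reduce v via v₂
            have hb2 : Btw G b v₂ p := btw_init hc hbv (btw_comm hv₂.2.2)
            have hz2 : Btw G u z v₂ := btw_replace_right hc huv hv₂.2.1
            have e : G.dist z v₂ + G.dist v₂ v = G.dist z v := hv₂.2.1
            have hne : 1 ≤ G.dist v₂ v := one_le_dist_of_ne hc h4
            exact ih (by omega) hau hb2 hz2
        · -- reduce v via v₁
          have hb1 : Btw G b v₁ p := btw_mid hc hbv hv₁.1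
          have hz1 : Btw G u z v₁ := btw_replace_right hc huv hv₁.2.2
          have e : G.dist z v₁ + G.dist v₁ v = G.dist z v := hv₁.2.2
          have hne : 1 ≤ G.dist v₁ v := one_le_dist_of_ne hc h3
          exact ih (by omega) hau hb1 hz1
      · -- reduce u via u₂
        have ha2 : Btw G a u₂ p := btw_init hc hau (btw_comm hu₂.2.2)
        have hz2 : Btw G u₂ z v := btw_replace_left hc huv hu₂.2.1
        have e : G.dist z u₂ + G.dist u₂ u = G.dist z u := hu₂.2.1
        have hne : 1 ≤ G.dist u₂ u := one_le_dist_of_ne hc h2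
        have c1 : G.dist u z = G.dist z u := SimpleGraph.dist_comm
        have c2 : G.dist u₂ z = G.dist z u₂ := SimpleGraph.dist_comm
        exact ih (by omega) ha2 hbv hz2
    · -- reduce u via u₁
      have ha1 : Btw G a u₁ p := btw_mid hc hau hu₁.1
      have hz1 : Btw G u₁ z v := btw_replace_left hc huv hu₁.2.2
      have e : G.dist z u₁ + G.dist u₁ u = G.dist z u := hu₁.2.2
      have hne : 1 ≤ G.dist u₁ u := one_le_dist_of_ne hc h1
      have c1 : G.dist u z = G.dist z u := SimpleGraph.dist_comm
      have c2 : G.dist u₁ z = G.dist z u₁ := SimpleGraph.dist_comm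
      exact ih (by omega) ha1 hbv hz1

/-- Join-hull commutativity: the union of intervals from a convex set to a point
is convex. -/
lemma jhc {A : Set V} (hA : GraphConvex G A) (p : V) :
    GraphConvex G {z : V | ∃ s ∈ A, Btw G s z p} := by
  rintro u ⟨a, ha, hau⟩ v ⟨b, hb, hbv⟩ z hz
  have hz' : Btw G u z v := hz
  obtain ⟨c, hab, hcz⟩ :=
    cl hc hm p (G.dist u z + G.dist z v) le_rfl hau hbv hz'
  exact ⟨c, hA a ha b hb c hab, hcz⟩

end Median

lemma hull_convex (C : Set V) : GraphConvex G (graphConvexHull G C) := by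
  intro x hx y hy z hz
  rw [Set.mem_sInter] at *
  intro s hs
  exact hs.1 x (hx s hs) y (hy s hs) z hz

lemma subset_hull (C : Set V) : C ⊆ graphConvexHull G C := fun _ hc =>
  Set.mem_sInter.mpr fun _ hs => hs.2 hc

lemma hull_min {C P : Set V} (hP : GraphConvex G P) (hCP : C ⊆ P) :
    graphConvexHull G C ⊆ P :=
  Set.sInter_subset_of_mem ⟨hP, hCP⟩

lemma convex_singleton (hc : G.Connected) (a : V) : GraphConvex G ({a} : Set V) := by
  intro x hx y hy z hz
  have hxa : x = a := hx
  have hya : y = a := hy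
  have hz' : G.dist x z + G.dist z y = G.dist x y := hz
  rw [hxa, hya] at hz'
  have hself : G.dist a a = 0 := SimpleGraph.dist_self
  have : G.dist a z = 0 := by omega
  exact ((eq_of_dist_eq_zero hc this).symm : z ∈ ({a} : Set V))

/-- The radius bound: every point of the hull of `C` is within `D * |C|` of every
point of `C₀ ⊇ C`. -/
lemma radius (hc : G.Connected) (hm : ∀ x y z : V, ∃! m : V, IsMed G m x y z)
    (D : ℕ) (C₀ : Finset V) (hD : ∀ x ∈ C₀, ∀ y ∈ C₀, G.dist x y ≤ D) :
    ∀ (C : Finset V) (hC : C.Nonempty), (C : Set V) ⊆ (C₀ : Set V) →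
      ∀ v ∈ graphConvexHull G (C : Set V), ∀ c ∈ C₀, G.dist v c ≤ D * C.card := by
  intro C hC
  induction hC using Finset.Nonempty.cons_induction with
  | singleton a =>
    intro hsub v hv c hcC
    have hva : v = a := by
      have := hull_min (convex_singleton hc a)
        (by simp : (↑({a} : Finset V) : Set V) ⊆ ({a} : Set V)) hv
      simpa using this
    subst hva
    have : G.dist v c ≤ D := hD v (by simpa using hsub (by simp)) c hcC
    simpa using this
  | cons a s h hs ih =>
    intro hsub v hv c hcC
    have hsubs : (s : Set V) ⊆ (C₀ : Set V) := by
      intro x hx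
      exact hsub (by simp [hx] : x ∈ (↑(Finset.cons a s h) : Set V))
    have haC₀ : a ∈ C₀ := by
      have : a ∈ (↑(Finset.cons a s h) : Set V) := by simp
      exact_mod_cast hsub this
    -- the union of intervals from hull(s) to a
    set U : Set V := {z : V | ∃ w ∈ graphConvexHull G (s : Set V), Btw G w z a} with hU
    have hUconv : GraphConvex G U := jhc hc hm (hull_convex (s : Set V)) a
    have hCU : (↑(Finset.cons a s h) : Set V) ⊆ U := by
      intro x hx
      have hx' : x = a ∨ x ∈ s := by simpa using hx
      rcases hx' with rfl | hx'
      · obtain ⟨c₁, hc₁⟩ := hs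
        exact ⟨c₁, subset_hull _ (by simpa using hc₁), btw_self_right c₁ x⟩
      · exact ⟨x, subset_hull _ (by simpa using hx'), btw_self_left x a⟩
    have hvU : v ∈ U := hull_min hUconv hCU hv
    obtain ⟨w, hw, hwva⟩ := hvU
    obtain ⟨m, hmm⟩ := (hm w a c).exists
    have h1 : G.dist v m ≤ G.dist w a := int_diam hc hwva hmm.1
    have h2 : G.dist w a ≤ D * s.card := ih hsubs w hw a haC₀
    have h3 : G.dist m c ≤ D := by
      have e : G.dist a m + G.dist m c = G.dist a c := hmm.2.1
      have := hD a haC₀ c hcC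
      omega
    have t : G.dist v c ≤ G.dist v m + G.dist m c := tri hc v m c
    have hcard : (Finset.cons a s h).card = s.card + 1 := Finset.card_cons h
    calc G.dist v c ≤ G.dist v m + G.dist m c := t
      _ ≤ D * s.card + D := by omega
      _ = D * (Finset.cons a s h).card := by rw [hcard, Nat.mul_succ]

end Stmt15Aux

/-- In a median graph, if `C` is a finite nonempty set of
`K` vertices of pairwise distance at most `D`, then the convex hull of `C`
has diameter at most `D·K²`. -/
theorem stmt15 {V : Type*} (G : SimpleGraph V) (hG : IsMedianGraph G)
    (C : Finset V) (hC : C.Nonempty) (D : ℕ)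
    (hD : ∀ x ∈ C, ∀ y ∈ C, G.dist x y ≤ D) :
    ∀ x ∈ graphConvexHull G (C : Set V), ∀ y ∈ graphConvexHull G (C : Set V),
      G.dist x y ≤ D * C.card ^ 2 := by
  classical
  obtain ⟨hc, hmed⟩ := hG
  have hm : ∀ x y z : V, ∃! m : V, Stmt15Aux.IsMed G m x y z := hmed
  intro x hx y hy
  by_cases h1 : C.card = 1
  · obtain ⟨a, rfl⟩ := Finset.card_eq_one.mp h1
    have hsub : graphConvexHull G (↑({a} : Finset V) : Set V) ⊆ ({a} : Set V) :=
      Stmt15Aux.hull_min (Stmt15Aux.convex_singleton hc a) (by simp)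
    have hxa : x = a := by simpa using hsub hx
    have hya : y = a := by simpa using hsub hy
    subst hxa; subst hya
    simp [SimpleGraph.dist_self]
  · have hK : 2 ≤ C.card := by
      have := Finset.card_pos.mpr hC
      omega
    obtain ⟨c₀, hc₀⟩ := hC
    have r := Stmt15Aux.radius hc hm D C hD C ⟨c₀, hc₀⟩ (subset_refl _)
    have rx : G.dist x c₀ ≤ D * C.card := r x hx c₀ hc₀
    have ry : G.dist y c₀ ≤ D * C.card := r y hy c₀ hc₀
    have t : G.dist x y ≤ G.dist x c₀ + G.dist c₀ y := hc.dist_triangle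
    have cy : G.dist c₀ y = G.dist y c₀ := SimpleGraph.dist_comm
    have h2K : 2 * C.card ≤ C.card ^ 2 := by
      have : C.card ^ 2 = C.card * C.card := sq C.card
      nlinarith
    calc G.dist x y ≤ D * C.card + D * C.card := by omega
      _ = D * (2 * C.card) := by ring
      _ ≤ D * C.card ^ 2 := Nat.mul_le_mul_left D h2K
end

section
/- Let (E, λ) be a regular M-labeled event structure over a trace alphabet M = (Σ, I) (so E is trace-regular), and let Ḡ(E) be the directed labeled graph obtained from G(E) with basepoint v0 = ∅ by directing each edge from c to c ∪ {e} and labeling it λ(e). If the clusters of G(E) have uniformly bounded diameter (there is δ such that any two vertices of a common cluster are at distance at most δ in G(E)), then Ḡ(E) is a context-free graph. -/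
/-- The set of events of `E ∖ c`: events outside `c` not in conflict with `c`. -/
abbrev Residual {E : Type*} (ES : EventStructure E) (c : ES.Config) : Set E :=
  {e | e ∉ c.1 ∧ ∀ e' ∈ c.1, ¬ ES.conflict e' e}

/-- The rooted labeled event structures `E ∖ c` and `E ∖ c'` are isomorphic. -/
abbrev ResidualIso {E A : Type*} (ES : EventStructure E) (lab : E → A)
    (c c' : ES.Config) : Prop :=
  ∃ f : Residual ES c ≃ Residual ES c',
    (∀ x y : Residual ES c, ES.le x.1 y.1 ↔ ES.le (f x).1 (f y).1) ∧
    (∀ x y : Residual ES c, ES.conflict x.1 y.1 ↔ ES.conflict (f x).1 (f y).1) ∧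
    ∀ x : Residual ES c, lab (f x).1 = lab x.1

/-- A labeled event structure is regular: the rooted labeled event structures
`E ∖ c` fall into finitely many isomorphism classes. -/
abbrev RegularLabeled {E A : Type*} (ES : EventStructure E) (lab : E → A) : Prop :=
  ∃ s : Set ES.Config, s.Finite ∧ ∀ c : ES.Config, ∃ c' ∈ s, ResidualIso ES lab c c'

/-- `Υ` is an end of `G` at level `k + 1`: a connected component of the
subgraph induced by the vertices at distance greater than `k` from `v₀`. -/
abbrev IsEnd {V : Type*} (G : SimpleGraph V) (v0 : V) (k : ℕ) (Υ : Set V) : Prop :=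
  ∃ x, k < G.dist v0 x ∧
    Υ = {y | k < G.dist v0 y ∧ ∃ w : G.Walk x y, ∀ z ∈ w.support, k < G.dist v0 z}

/-- The cluster of an end at level `k + 1`: its vertices on the sphere of
radius `k + 1`. -/
abbrev endCluster {V : Type*} (G : SimpleGraph V) (v0 : V) (k : ℕ)
    (Υ : Set V) : Set V :=
  {y ∈ Υ | G.dist v0 y = k + 1}

/-- The directed labeled adjacency of `Ḡ(E)`: an edge from `c` to `c ∪ {e}`
labeled `lab e = a`. -/
abbrev dirAdj {E A : Type*} (ES : EventStructure E) (lab : E → A)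
    (c c' : ES.Config) (a : A) : Prop :=
  ∃ e, ES.Extends c c' e ∧ lab e = a

/-- An end-isomorphism between the ends `(k, Υ)` and `(k', Υ')` of `Ḡ(E)`:
a bijection preserving directed labeled edges and mapping cluster to cluster. -/
abbrev EndIso {E A : Type*} (ES : EventStructure E) (lab : E → A)
    (k : ℕ) (Υ : Set ES.Config) (k' : ℕ) (Υ' : Set ES.Config) : Prop :=
  ∃ f : Υ ≃ Υ',
    (∀ (x y : Υ) (a : A), dirAdj ES lab x.1 y.1 a ↔ dirAdj ES lab (f x).1 (f y).1 a) ∧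
    ∀ x : Υ, (ES.configGraph.dist ES.emptyConfig x.1 = k + 1 ↔
      ES.configGraph.dist ES.emptyConfig (f x).1 = k' + 1)

/-- The directed labeled graph `Ḡ(E)` is context-free: its ends fall into
finitely many classes under end-isomorphisms. -/
abbrev ContextFreeGraph {E A : Type*} (ES : EventStructure E) (lab : E → A) : Prop :=
  ∃ s : Set (ℕ × Set ES.Config), s.Finite ∧
    ∀ (k : ℕ) (Υ : Set ES.Config),
      IsEnd ES.configGraph ES.emptyConfig k Υ →
      ∃ q ∈ s, IsEnd ES.configGraph ES.emptyConfig q.1 q.2 ∧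
        EndIso ES lab k Υ q.1 q.2

namespace Stmt16Aux

open EventStructure Finset

variable {E : Type*} {ES : EventStructure E}

attribute [local instance] Classical.decEq Classical.propDecidable

/-- symmetric difference size -/
noncomputable def sd (x y : Finset E) : ℕ := (x \ y).card + (y \ x).card

lemma sd_comm (x y : Finset E) : sd x y = sd y x := Nat.add_comm _ _

lemma sd_self (x : Finset E) : sd x x = 0 := by simp [sd]

lemma sd_eq_zero {x y : Finset E} (h : sd x y = 0) : x = y := by
  have h1 : x \ y = ∅ := Finset.card_eq_zero.mp (Nat.eq_zero_of_add_eq_zero_right h)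
  have h2 : y \ x = ∅ := Finset.card_eq_zero.mp (Nat.eq_zero_of_add_eq_zero_left h)
  apply Finset.Subset.antisymm <;> intro a ha
  · by_contra hx
    exact absurd (h1 ▸ Finset.mem_sdiff.mpr ⟨ha, hx⟩) (Finset.notMem_empty a)
  · by_contra hx
    exact absurd (h2 ▸ Finset.mem_sdiff.mpr ⟨ha, hx⟩) (Finset.notMem_empty a)

lemma sd_triangle (x y z : Finset E) : sd x z ≤ sd x y + sd y z := by
  have hsub : ∀ a b c : Finset E, a \ c ⊆ (a \ b) ∪ (b \ c) := by
    intro a b c e he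
    rcases Finset.mem_sdiff.mp he with ⟨ha, hc⟩
    by_cases hb : e ∈ b
    · exact Finset.mem_union_right _ (Finset.mem_sdiff.mpr ⟨hb, hc⟩)
    · exact Finset.mem_union_left _ (Finset.mem_sdiff.mpr ⟨ha, hb⟩)
  have h1 : (x \ z).card ≤ (x \ y).card + (y \ z).card :=
    le_trans (Finset.card_le_card (hsub x y z)) (Finset.card_union_le _ _)
  have h2 : (z \ x).card ≤ (z \ y).card + (y \ x).card :=
    le_trans (Finset.card_le_card (hsub z y x)) (Finset.card_union_le _ _)
  unfold sd; omega

lemma extends_eq {c c' : ES.Config} {e : E} (h : ES.Extends c c' e) :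
    c'.1 = insert e c.1 := by
  ext x
  rw [h.2 x, Finset.mem_insert]

lemma extends_card {c c' : ES.Config} {e : E} (h : ES.Extends c c' e) :
    c'.1.card = c.1.card + 1 := by
  rw [extends_eq h, Finset.card_insert_of_notMem h.1]

lemma extends_subset {c c' : ES.Config} {e : E} (h : ES.Extends c c' e) :
    c.1 ⊆ c'.1 := by
  rw [extends_eq h]; exact Finset.subset_insert _ _

lemma sd_of_extends {c c' : ES.Config} {e : E} (h : ES.Extends c c' e) :
    sd c.1 c'.1 = 1 := by
  have h1 : c.1 \ c'.1 = ∅ := Finset.sdiff_eq_empty_iff_subset.mpr (extends_subset h)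
  have h2 : c'.1 \ c.1 = {e} := by
    rw [extends_eq h]
    ext x
    simp only [Finset.mem_sdiff, Finset.mem_insert, Finset.mem_singleton]
    constructor
    · rintro ⟨hx | hx, hnx⟩
      · exact hx
      · exact absurd hx hnx
    · rintro rfl; exact ⟨Or.inl rfl, h.1⟩
  simp [sd, h1, h2]

lemma sd_of_adj {c c' : ES.Config} (h : ES.configGraph.Adj c c') : sd c.1 c'.1 = 1 := by
  rcases h with ⟨e, he⟩ | ⟨e, he⟩
  · exact sd_of_extends he
  · rw [sd_comm]; exact sd_of_extends he

lemma sd_le_walk_length {c c' : ES.Config} (p : ES.configGraph.Walk c c') :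
    sd c.1 c'.1 ≤ p.length := by
  induction p with
  | nil => simp [sd_self]
  | @cons u v w h q ih =>
    have t := sd_triangle u.1 v.1 w.1
    have a := sd_of_adj h
    simp only [SimpleGraph.Walk.length_cons]
    omega


/-- every nonempty finite set has a `≤`-minimal element -/
lemma exists_min_elt (ES : EventStructure E) (s : Finset E) (hs : s.Nonempty) :
    ∃ e ∈ s, ∀ e' ∈ s, ES.le e' e → e' = e := by
  obtain ⟨e, he, hmin⟩ := Finset.exists_min_image s
    (fun e => (s.filter (fun x => ES.le x e)).card) hs
  refine ⟨e, he, fun e' he' hle => ?_⟩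
  by_contra hne
  have hsub : s.filter (fun x => ES.le x e') ⊆ s.filter (fun x => ES.le x e) := by
    intro x hx
    rcases Finset.mem_filter.mp hx with ⟨hxs, hxe'⟩
    exact Finset.mem_filter.mpr ⟨hxs, ES.le_trans _ _ _ hxe' hle⟩
  have hne' : e ∉ s.filter (fun x => ES.le x e') := by
    intro hc
    rcases Finset.mem_filter.mp hc with ⟨_, hee'⟩
    exact hne (ES.le_antisymm _ _ hle hee' ▸ rfl)
  have hmem : e ∈ s.filter (fun x => ES.le x e) :=
    Finset.mem_filter.mpr ⟨he, ES.le_refl e⟩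
  have hlt : (s.filter (fun x => ES.le x e')).card < (s.filter (fun x => ES.le x e)).card :=
    Finset.card_lt_card ⟨hsub, fun hc => hne' (hc hmem)⟩
  exact absurd (hmin e' he') (by omega)

/-- every nonempty finite set has a `≤`-maximal element -/
lemma exists_max_elt (ES : EventStructure E) (s : Finset E) (hs : s.Nonempty) :
    ∃ e ∈ s, ∀ e' ∈ s, ES.le e e' → e' = e := by
  obtain ⟨e, he, hmax⟩ := Finset.exists_max_image s
    (fun e => (s.filter (fun x => ES.le x e)).card) hs
  refine ⟨e, he, fun e' he' hle => ?_⟩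
  by_contra hne
  have hsub : s.filter (fun x => ES.le x e) ⊆ s.filter (fun x => ES.le x e') := by
    intro x hx
    rcases Finset.mem_filter.mp hx with ⟨hxs, hxe⟩
    exact Finset.mem_filter.mpr ⟨hxs, ES.le_trans _ _ _ hxe hle⟩
  have hne' : e' ∉ s.filter (fun x => ES.le x e) := by
    intro hc
    rcases Finset.mem_filter.mp hc with ⟨_, he'e⟩
    exact hne (ES.le_antisymm _ _ he'e hle ▸ rfl)
  have hmem : e' ∈ s.filter (fun x => ES.le x e') :=
    Finset.mem_filter.mpr ⟨he', ES.le_refl e'⟩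
  have hlt : (s.filter (fun x => ES.le x e)).card < (s.filter (fun x => ES.le x e')).card :=
    Finset.card_lt_card ⟨hsub, fun hc => hne' (hc hmem)⟩
  exact absurd (hmax e' he') (by omega)

/-- configs have sub-configs of every smaller size -/
lemma exists_subconfig (y : ES.Config) (m : ℕ) (hm : m ≤ y.1.card) :
    ∃ c : ES.Config, c.1 ⊆ y.1 ∧ c.1.card = m := by
  obtain ⟨d, hd⟩ : ∃ d, y.1.card = m + d := ⟨y.1.card - m, by omega⟩
  clear hm
  induction d generalizing y with
  | zero => exact ⟨y, Finset.Subset.refl _, by omega⟩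
  | succ n ih =>
    have hne : y.1.Nonempty := Finset.card_pos.mp (by omega)
    obtain ⟨e, he, hmax⟩ := exists_max_elt ES y.1 hne
    have hcfg : ES.IsConfig (y.1.erase e) := by
      constructor
      · intro x hx e' hle
        rcases Finset.mem_erase.mp hx with ⟨hxe, hxy⟩
        have he'y : e' ∈ y.1 := y.2.1 x hxy e' hle
        refine Finset.mem_erase.mpr ⟨?_, he'y⟩
        rintro rfl
        exact hxe (hmax x hxy hle)
      · intro a ha b hb
        exact y.2.2 a (Finset.mem_of_mem_erase ha) b (Finset.mem_of_mem_erase hb)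
    obtain ⟨c, hsub, hcard⟩ := ih ⟨y.1.erase e, hcfg⟩ (by
      simp only [Finset.card_erase_of_mem he]; omega)
    exact ⟨c, hsub.trans (Finset.erase_subset _ _), hcard⟩

/-- increasing chain walk between nested configs -/
lemma exists_chain_walk (u v : ES.Config) (h : u.1 ⊆ v.1) :
    ∃ p : ES.configGraph.Walk u v, p.length = (v.1 \ u.1).card ∧
      ∀ z ∈ p.support, u.1 ⊆ z.1 ∧ z.1 ⊆ v.1 := by
  obtain ⟨d, hd⟩ : ∃ d, (v.1 \ u.1).card = d := ⟨_, rfl⟩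
  induction d generalizing u with
  | zero =>
    have : u = v := by
      have hvu : v.1 ⊆ u.1 := by
        intro x hx
        by_contra hxu
        have : x ∈ v.1 \ u.1 := Finset.mem_sdiff.mpr ⟨hx, hxu⟩
        rw [Finset.card_eq_zero.mp hd] at this
        exact Finset.notMem_empty x this
      exact Subtype.ext (Finset.Subset.antisymm h hvu)
    subst this
    exact ⟨SimpleGraph.Walk.nil, by simpa using hd.symm, by
      intro z hz
      simp only [SimpleGraph.Walk.support_nil, List.mem_singleton] at hz
      subst hz; exact ⟨Finset.Subset.refl _, h⟩⟩
  | succ n ih =>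
    have hne : (v.1 \ u.1).Nonempty := Finset.card_pos.mp (by omega)
    obtain ⟨e, he, hmin⟩ := exists_min_elt ES (v.1 \ u.1) hne
    rcases Finset.mem_sdiff.mp he with ⟨hev, heu⟩
    have hcfg : ES.IsConfig (insert e u.1) := by
      constructor
      · intro x hx e' hle
        rcases Finset.mem_insert.mp hx with rfl | hxu
        · have he'v : e' ∈ v.1 := v.2.1 x hev e' hle
          by_cases he'u : e' ∈ u.1
          · exact Finset.mem_insert_of_mem he'u
          · have : e' = x := hmin e' (Finset.mem_sdiff.mpr ⟨he'v, he'u⟩) hle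
            exact this ▸ Finset.mem_insert_self _ _
        · exact Finset.mem_insert_of_mem (u.2.1 x hxu e' hle)
      · intro a ha b hb
        have hav : a ∈ v.1 := by
          rcases Finset.mem_insert.mp ha with rfl | h'
          · exact hev
          · exact h h'
        have hbv : b ∈ v.1 := by
          rcases Finset.mem_insert.mp hb with rfl | h'
          · exact hev
          · exact h h'
        exact v.2.2 a hav b hbv
    set u' : ES.Config := ⟨insert e u.1, hcfg⟩ with hu'
    have hext : ES.Extends u u' e := by
      refine ⟨heu, fun x => ?_⟩
      simp [hu', Finset.mem_insert]
    have hadj : ES.configGraph.Adj u u' := Or.inl ⟨e, hext⟩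
    have hsub' : u'.1 ⊆ v.1 := by
      intro x hx
      rcases Finset.mem_insert.mp hx with rfl | h'
      · exact hev
      · exact h h'
    have hcard' : (v.1 \ u'.1).card = n := by
      have : v.1 \ u'.1 = (v.1 \ u.1).erase e := by
        ext x
        simp only [Finset.mem_sdiff, Finset.mem_erase, hu', Finset.mem_insert]
        tauto
      rw [this, Finset.card_erase_of_mem he, hd]
      omega
    obtain ⟨p, hlen, hsup⟩ := ih u' hsub' hcard'
    refine ⟨SimpleGraph.Walk.cons hadj p, ?_, ?_⟩
    · have h0 := hlen
      rw [hcard'] at h0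
      rw [SimpleGraph.Walk.length_cons, h0, hd]
    · intro z hz
      rw [SimpleGraph.Walk.support_cons, List.mem_cons] at hz
      rcases hz with rfl | hz
      · exact ⟨Finset.Subset.refl _, h⟩
      · obtain ⟨h1, h2⟩ := hsup z hz
        exact ⟨fun x hx => h1 (Finset.mem_insert_of_mem hx), h2⟩

lemma reachable_all (c c' : ES.Config) : ES.configGraph.Reachable c c' := by
  obtain ⟨p, -, -⟩ := exists_chain_walk ES.emptyConfig c (by
    intro x hx; exact absurd hx (Finset.notMem_empty x))
  obtain ⟨q, -, -⟩ := exists_chain_walk ES.emptyConfig c' (by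
    intro x hx; exact absurd hx (Finset.notMem_empty x))
  exact ⟨p.reverse.append q⟩

lemma sd_le_dist (c c' : ES.Config) : sd c.1 c'.1 ≤ ES.configGraph.dist c c' := by
  obtain ⟨p, hp⟩ := (reachable_all c c').exists_walk_length_eq_dist
  exact hp ▸ sd_le_walk_length p

lemma dist_le_of_subset {u v : ES.Config} (h : u.1 ⊆ v.1) :
    ES.configGraph.dist u v ≤ (v.1 \ u.1).card := by
  obtain ⟨p, hlen, -⟩ := exists_chain_walk u v h
  exact hlen ▸ SimpleGraph.dist_le p

lemma dist_emptyConfig (c : ES.Config) :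
    ES.configGraph.dist ES.emptyConfig c = c.1.card := by
  have hsub : (ES.emptyConfig).1 ⊆ c.1 := by
    intro x hx; exact absurd hx (Finset.notMem_empty x)
  have h1 : ES.configGraph.dist ES.emptyConfig c ≤ c.1.card := by
    have h := dist_le_of_subset hsub
    have he : c.1 \ (ES.emptyConfig).1 = c.1 := by
      show c.1 \ (∅ : Finset E) = c.1
      simp
    rw [he] at h
    exact h
  have h2 : c.1.card ≤ ES.configGraph.dist ES.emptyConfig c := by
    have := sd_le_dist (ES := ES) ES.emptyConfig c
    have hsd : sd (ES.emptyConfig).1 c.1 = c.1.card := by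
      show sd (∅ : Finset E) c.1 = c.1.card
      simp [sd]
    omega
  omega


section Labeled

variable {A : Type*} [Fintype A] {I : A → A → Prop} {lab : E → A}

/-- two events added to the same configuration with the same label coincide -/
lemma extends_label_inj_add (hI : ∀ a, ¬ I a a)
    (hlab : IsTraceLabeling ES I lab) {c z z' : ES.Config} {e e' : E}
    (h : ES.Extends c z e) (h' : ES.Extends c z' e') (hl : lab e = lab e') : e = e' := by
  by_contra hne
  have hnI : ¬ I (lab e) (lab e') := by rw [hl]; exact hI _
  rcases hlab.les3 e e' hnI with hle | hle | hcon
  · -- e ≤ e' : then e ∈ z' so e = e' or e ∈ c, both impossible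
    have : e ∈ z'.1 := z'.2.1 e' ((h'.2 e').mpr (Or.inl rfl)) e hle
    rcases (h'.2 e).mp this with rfl | hec
    · exact hne rfl
    · exact h.1 hec
  · have : e' ∈ z.1 := z.2.1 e ((h.2 e).mpr (Or.inl rfl)) e' hle
    rcases (h.2 e').mp this with rfl | hec
    · exact hne rfl
    · exact h'.1 hec
  · -- conflict : show it is a minimal conflict, contradicting les1
    have hmin : ES.MinConflict e e' := by
      refine ⟨hcon, ?_⟩
      rintro ⟨e'', hne1, hne2, ⟨hle1, hcon1⟩ | ⟨hle2, hcon2⟩⟩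
      · have he''z : e'' ∈ z.1 := z.2.1 e ((h.2 e).mpr (Or.inl rfl)) e'' hle1
        have he''c : e'' ∈ c.1 := by
          rcases (h.2 e'').mp he''z with rfl | hc
          · exact absurd rfl hne1
          · exact hc
        have he''z' : e'' ∈ z'.1 := (h'.2 e'').mpr (Or.inr he''c)
        exact z'.2.2 e'' he''z' e' ((h'.2 e').mpr (Or.inl rfl)) hcon1
      · have he''z' : e'' ∈ z'.1 := z'.2.1 e' ((h'.2 e').mpr (Or.inl rfl)) e'' hle2
        have he''c : e'' ∈ c.1 := by
          rcases (h'.2 e'').mp he''z' with rfl | hc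
          · exact absurd rfl hne2
          · exact hc
        have he''z : e'' ∈ z.1 := (h.2 e'').mpr (Or.inr he''c)
        exact z.2.2 e'' he''z e ((h.2 e).mpr (Or.inl rfl)) hcon2
    exact hlab.les1 e e' hmin hl

/-- two events removed from the same configuration with the same label coincide -/
lemma extends_label_inj_rem (hI : ∀ a, ¬ I a a)
    (hlab : IsTraceLabeling ES I lab) {c z z' : ES.Config} {e e' : E}
    (h : ES.Extends z c e) (h' : ES.Extends z' c e') (hl : lab e = lab e') : e = e' := by
  by_contra hne
  have hec : e ∈ c.1 := (h.2 e).mpr (Or.inl rfl)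
  have he'c : e' ∈ c.1 := (h'.2 e').mpr (Or.inl rfl)
  have hnI : ¬ I (lab e) (lab e') := by rw [hl]; exact hI _
  rcases hlab.les3 e e' hnI with hle | hle | hcon
  · -- e ≤ e', e ≠ e' : then e' ∈ z (since e' ∈ c, e' ≠ e) and e ∈ z by dc, contra
    have he'z : e' ∈ z.1 := by
      rcases (h.2 e').mp he'c with rfl | hz
      · exact absurd rfl (Ne.symm hne)
      · exact hz
    exact h.1 (z.2.1 e' he'z e hle)
  · have hez : e ∈ z'.1 := by
      rcases (h'.2 e).mp hec with rfl | hz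
      · exact absurd rfl hne
      · exact hz
    exact h'.1 (z'.2.1 e hez e' hle)
  · exact c.2.2 e hec e' he'c hcon

/-- each configuration has at most `2·|A|` neighbours in the domain graph -/
lemma neighbors_bounded [Nonempty A] (hI : ∀ a, ¬ I a a)
    (hlab : IsTraceLabeling ES I lab) (c : ES.Config) :
    ∃ t : Finset ES.Config, t.card ≤ 2 * Fintype.card A ∧
      ∀ z, ES.configGraph.Adj c z → z ∈ t := by
  classical
  set N : Set ES.Config := {z | ES.configGraph.Adj c z} with hN
  set ψ : ES.Config → A × Bool := fun z =>
    if h : ES.Covers c z then (lab h.choose, true)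
    else if h' : ES.Covers z c then (lab h'.choose, false)
    else (Classical.arbitrary A, false) with hψ
  have hinj : Set.InjOn ψ N := by
    intro z hz z' hz' heq
    simp only [hψ] at heq
    by_cases h1 : ES.Covers c z
    · by_cases h2 : ES.Covers c z'
      · simp only [dif_pos h1, dif_pos h2, Prod.mk.injEq] at heq
        have he : h1.choose = h2.choose :=
          extends_label_inj_add hI hlab h1.choose_spec h2.choose_spec heq.1
        apply Subtype.ext
        rw [extends_eq h1.choose_spec, extends_eq h2.choose_spec, he]
      · rw [dif_pos h1, dif_neg h2] at heq
        by_cases h3 : ES.Covers z' c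
        · rw [dif_pos h3] at heq
          exact absurd (congrArg Prod.snd heq) (by simp)
        · rw [dif_neg h3] at heq
          exact absurd (congrArg Prod.snd heq) (by simp)
    · have h1' : ES.Covers z c := by
        rcases hz with hc | hc
        · exact absurd hc h1
        · exact hc
      by_cases h2 : ES.Covers c z'
      · rw [dif_neg h1, dif_pos h2, dif_pos h1'] at heq
        exact absurd (congrArg Prod.snd heq) (by simp)
      · have h2' : ES.Covers z' c := by
          rcases hz' with hc | hc
          · exact absurd hc h2
          · exact hc
        rw [dif_neg h1, dif_pos h1', dif_neg h2, dif_pos h2'] at heq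
        simp only [Prod.mk.injEq] at heq
        have he : h1'.choose = h2'.choose :=
          extends_label_inj_rem hI hlab h1'.choose_spec h2'.choose_spec heq.1
        -- z.1 = c.1.erase e, z'.1 = c.1.erase e
        have hz1 : z.1 = c.1.erase h1'.choose := by
          have hs := h1'.choose_spec
          rw [extends_eq hs]
          rw [Finset.erase_insert hs.1]
        have hz2 : z'.1 = c.1.erase h2'.choose := by
          have hs := h2'.choose_spec
          rw [extends_eq hs]
          rw [Finset.erase_insert hs.1]
        apply Subtype.ext
        rw [hz1, hz2, he]
  have hfin : N.Finite := by
    have : (ψ '' N).Finite := Set.toFinite _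
    exact Set.Finite.of_finite_image this hinj
  refine ⟨hfin.toFinset, ?_, fun z hz => hfin.mem_toFinset.mpr hz⟩
  have hle : hfin.toFinset.card ≤ (Finset.univ : Finset (A × Bool)).card := by
    apply Finset.card_le_card_of_injOn ψ (fun x _ => Finset.mem_univ _)
    intro x hx y hy
    exact hinj (hfin.mem_toFinset.mp hx) (hfin.mem_toFinset.mp hy)
  calc hfin.toFinset.card ≤ (Finset.univ : Finset (A × Bool)).card := hle
  _ = 2 * Fintype.card A := by
      rw [Finset.card_univ, Fintype.card_prod, Fintype.card_bool]
      ring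

lemma walk_last_decomp {V : Type*} {G : SimpleGraph V} {u v : V} (p : G.Walk u v)
    (hn : p.length ≠ 0) :
    ∃ w, ∃ q : G.Walk u w, G.Adj w v ∧ q.length + 1 = p.length := by
  cases hq : p.reverse with
  | nil =>
    exfalso
    have : p.reverse.length = p.length := SimpleGraph.Walk.length_reverse p
    rw [hq] at this
    simp at this
    exact hn this.symm
  | cons h q =>
    refine ⟨_, q.reverse, h.symm, ?_⟩
    have h1 : p.reverse.length = p.length := SimpleGraph.Walk.length_reverse p
    rw [hq] at h1
    simp only [SimpleGraph.Walk.length_cons] at h1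
    rw [SimpleGraph.Walk.length_reverse]
    omega

/-- balls in the domain graph are finite, of size at most `(2|A|+1)^r` -/
lemma ball_bounded [Nonempty A] (hI : ∀ a, ¬ I a a)
    (hlab : IsTraceLabeling ES I lab) (c : ES.Config) (r : ℕ) :
    ∃ t : Finset ES.Config, t.card ≤ (2 * Fintype.card A + 1) ^ r ∧
      ∀ z, ∀ p : ES.configGraph.Walk c z, p.length ≤ r → z ∈ t := by
  classical
  choose nb hcard hmem using fun z => neighbors_bounded (ES := ES) hI hlab (lab := lab) z
  induction r with
  | zero =>
    refine ⟨{c}, by simp, fun z p hp => ?_⟩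
    have : c = z := p.eq_of_length_eq_zero (Nat.le_zero.mp hp)
    simp [this]
  | succ n ih =>
    obtain ⟨t, hc, hm⟩ := ih
    refine ⟨t.biUnion (fun z => insert z (nb z)), ?_, ?_⟩
    · calc (t.biUnion (fun z => insert z (nb z))).card
          ≤ ∑ z ∈ t, (insert z (nb z)).card := Finset.card_biUnion_le
      _ ≤ ∑ z ∈ t, (2 * Fintype.card A + 1) := by
          apply Finset.sum_le_sum
          intro z hz
          calc (insert z (nb z)).card ≤ (nb z).card + 1 := Finset.card_insert_le _ _
          _ ≤ 2 * Fintype.card A + 1 := by have := hcard z; omega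
      _ = t.card * (2 * Fintype.card A + 1) := by
          rw [Finset.sum_const, smul_eq_mul]
      _ ≤ (2 * Fintype.card A + 1) ^ n * (2 * Fintype.card A + 1) :=
          Nat.mul_le_mul_right _ hc
      _ = (2 * Fintype.card A + 1) ^ (n + 1) := (pow_succ _ _).symm
    · intro z p hp
      by_cases h0 : p.length = 0
      · have : c = z := p.eq_of_length_eq_zero h0
        subst this
        have hct : c ∈ t := hm c SimpleGraph.Walk.nil (by simp)
        exact Finset.mem_biUnion.mpr ⟨c, hct, Finset.mem_insert_self _ _⟩
      · obtain ⟨w, q, hadj, hlen⟩ := walk_last_decomp p h0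
        have hw : w ∈ t := hm w q (by omega)
        exact Finset.mem_biUnion.mpr ⟨w, hw, Finset.mem_insert_of_mem (hmem w z hadj)⟩

end Labeled


section Transfer

variable {A : Type*} {lab : E → A}

lemma mem_residual_of {b y : ES.Config} (hby : b.1 ⊆ y.1) {e : E}
    (hey : e ∈ y.1) (heb : e ∉ b.1) : e ∈ Residual ES b :=
  ⟨heb, fun e' he' hc => y.2.2 e' (hby he') e hey hc⟩

/-- the transfer relation along a residual isomorphism -/
def TRel (b b' : ES.Config) (f : Residual ES b ≃ Residual ES b')
    (y y' : ES.Config) : Prop :=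
  b.1 ⊆ y.1 ∧ b'.1 ⊆ y'.1 ∧
    ∀ x, x ∈ y'.1 ↔ (x ∈ b'.1 ∨ ∃ e, ∃ he : e ∈ Residual ES b, e ∈ y.1 ∧ (f ⟨e, he⟩).1 = x)

lemma trel_unique {b b' : ES.Config} {f : Residual ES b ≃ Residual ES b'}
    {y y₁ y₂ : ES.Config} (h1 : TRel b b' f y y₁) (h2 : TRel b b' f y y₂) : y₁ = y₂ := by
  apply Subtype.ext
  ext x
  rw [h1.2.2 x, h2.2.2 x]

lemma trel_exists {b b' : ES.Config} (f : Residual ES b ≃ Residual ES b')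
    (hfle : ∀ x y, ES.le x.1 y.1 ↔ ES.le (f x).1 (f y).1)
    (hfconf : ∀ x y, ES.conflict x.1 y.1 ↔ ES.conflict (f x).1 (f y).1)
    (y : ES.Config) (hby : b.1 ⊆ y.1) : ∃ y', TRel b b' f y y' := by
  classical
  set s : Finset E := (y.1 \ b.1).attach.image
    (fun x => (f ⟨x.1, mem_residual_of hby (Finset.mem_sdiff.mp x.2).1
      (Finset.mem_sdiff.mp x.2).2⟩).1) with hs
  have hmem_s : ∀ x, x ∈ s ↔ ∃ e, ∃ he : e ∈ Residual ES b, e ∈ y.1 ∧ (f ⟨e, he⟩).1 = x := by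
    intro x
    constructor
    · intro hx
      rw [hs, Finset.mem_image] at hx
      obtain ⟨u, hu, hux⟩ := hx
      exact ⟨u.1, _, (Finset.mem_sdiff.mp u.2).1, hux⟩
    · rintro ⟨e, he, hey, hfe⟩
      rw [hs, Finset.mem_image]
      refine ⟨⟨e, Finset.mem_sdiff.mpr ⟨hey, he.1⟩⟩, Finset.mem_attach _ _, ?_⟩
      rw [← hfe]
    -- proof irrelevance on the residual membership
  have hres_s : ∀ x ∈ s, x ∈ Residual ES b' := by
    intro x hx
    obtain ⟨e, he, hey, hfe⟩ := (hmem_s x).mp hx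
    exact hfe ▸ (f ⟨e, he⟩).2
  have hcfg : ES.IsConfig (b'.1 ∪ s) := by
    constructor
    · intro x hx e'' hle
      rcases Finset.mem_union.mp hx with hxb | hxs
      · exact Finset.mem_union_left _ (b'.2.1 x hxb e'' hle)
      · by_cases he''b : e'' ∈ b'.1
        · exact Finset.mem_union_left _ he''b
        · obtain ⟨e, he, hey, hfe⟩ := (hmem_s x).mp hxs
          have hxres : x ∈ Residual ES b' := hres_s x hxs
          have he''res : e'' ∈ Residual ES b' := by
            refine ⟨he''b, fun w hw hc => ?_⟩
            exact hxres.2 w hw (ES.conflict_le w e'' x hc hle)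
          set u := f.symm ⟨e'', he''res⟩ with hu
          have hfu : (f u).1 = e'' := by rw [hu, Equiv.apply_symm_apply]
          have hle' : ES.le u.1 e := by
            rw [hfle u ⟨e, he⟩, hfu, hfe]
            exact hle
          have huy : u.1 ∈ y.1 := y.2.1 e hey u.1 hle'
          apply Finset.mem_union_right
          rw [hmem_s]
          exact ⟨u.1, u.2, huy, by rw [Subtype.coe_eta, hfu]⟩
    · intro a ha w hw
      rcases Finset.mem_union.mp ha with hab | has <;>
        rcases Finset.mem_union.mp hw with hwb | hws
      · exact b'.2.2 a hab w hwb
      · intro hc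
        exact (hres_s w hws).2 a hab hc
      · intro hc
        exact (hres_s a has).2 w hwb (ES.conflict_symm _ _ hc)
      · obtain ⟨e1, he1, hey1, hfe1⟩ := (hmem_s a).mp has
        obtain ⟨e2, he2, hey2, hfe2⟩ := (hmem_s w).mp hws
        intro hc
        rw [← hfe1, ← hfe2, ← hfconf] at hc
        exact y.2.2 e1 hey1 e2 hey2 hc
  refine ⟨⟨b'.1 ∪ s, hcfg⟩, hby, Finset.subset_union_left, fun x => ?_⟩
  simp only [Finset.mem_union]
  rw [hmem_s]

lemma trel_card {b b' : ES.Config} {f : Residual ES b ≃ Residual ES b'}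
    {y y' : ES.Config} (h : TRel b b' f y y') :
    (y'.1 \ b'.1).card = (y.1 \ b.1).card := by
  classical
  -- y' \ b' is the image of y \ b under the injection induced by f
  set g : E → E := fun e =>
    if he : e ∈ Residual ES b then (f ⟨e, he⟩).1 else e with hg
  have himg : y'.1 \ b'.1 = (y.1 \ b.1).image g := by
    ext x
    simp only [Finset.mem_sdiff, Finset.mem_image]
    constructor
    · rintro ⟨hxy', hxb'⟩
      rcases (h.2.2 x).mp hxy' with hxb | ⟨e, he, hey, hfe⟩
      · exact absurd hxb hxb'
      · exact ⟨e, ⟨hey, he.1⟩, by rw [hg]; simp only [dif_pos he]; exact hfe⟩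
    · rintro ⟨e, ⟨hey, heb⟩, hgx⟩
      have he : e ∈ Residual ES b := mem_residual_of h.1 hey heb
      rw [hg] at hgx
      simp only [dif_pos he] at hgx
      constructor
      · exact (h.2.2 x).mpr (Or.inr ⟨e, he, hey, hgx⟩)
      · rw [← hgx]
        exact (f ⟨e, he⟩).2.1
  rw [himg]
  apply Finset.card_image_of_injOn
  intro e1 h1 e2 h2 heq
  simp only [Finset.coe_sdiff, Set.mem_diff, Finset.mem_coe] at h1 h2
  have he1 : e1 ∈ Residual ES b := mem_residual_of h.1 h1.1 h1.2
  have he2 : e2 ∈ Residual ES b := mem_residual_of h.1 h2.1 h2.2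
  rw [hg] at heq
  simp only [dif_pos he1, dif_pos he2] at heq
  have := f.injective (Subtype.ext heq)
  exact congrArg Subtype.val this

lemma trel_symm {b b' : ES.Config} {f : Residual ES b ≃ Residual ES b'}
    {y y' : ES.Config} (h : TRel b b' f y y') : TRel b' b f.symm y' y := by
  refine ⟨h.2.1, h.1, fun x => ?_⟩
  constructor
  · intro hxy
    by_cases hxb : x ∈ b.1
    · exact Or.inl hxb
    · have he : x ∈ Residual ES b := mem_residual_of h.1 hxy hxb
      refine Or.inr ⟨(f ⟨x, he⟩).1, (f ⟨x, he⟩).2, ?_, ?_⟩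
      · exact (h.2.2 _).mpr (Or.inr ⟨x, he, hxy, rfl⟩)
      · rw [Subtype.coe_eta, Equiv.symm_apply_apply]
  · rintro (hxb | ⟨e', he', hey', hfe'⟩)
    · exact h.1 hxb
    · rcases (h.2.2 e').mp hey' with he'b | ⟨e, he, hey, hfe⟩
      · exact absurd he'b he'.1
      · have : (⟨e', he'⟩ : Residual ES b') = f ⟨e, he⟩ := Subtype.ext hfe.symm
        rw [this, Equiv.symm_apply_apply] at hfe'
        rw [← hfe']
        exact hey

lemma trel_subset {b b' : ES.Config} {f : Residual ES b ≃ Residual ES b'}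
    {y y' z z' : ES.Config} (h1 : TRel b b' f y y') (h2 : TRel b b' f z z')
    (hyz : y.1 ⊆ z.1) : y'.1 ⊆ z'.1 := by
  intro x hx
  rcases (h1.2.2 x).mp hx with hxb | ⟨e, he, hey, hfe⟩
  · exact h2.2.1 hxb
  · exact (h2.2.2 x).mpr (Or.inr ⟨e, he, hyz hey, hfe⟩)

lemma trel_extends {b b' : ES.Config} {f : Residual ES b ≃ Residual ES b'}
    {y y' z z' : ES.Config} (h1 : TRel b b' f y y') (h2 : TRel b b' f z z')
    {e : E} (hext : ES.Extends y z e) :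
    ∃ hre : e ∈ Residual ES b, ES.Extends y' z' (f ⟨e, hre⟩).1 := by
  have hez : e ∈ z.1 := (hext.2 e).mpr (Or.inl rfl)
  have heb : e ∉ b.1 := fun hc => hext.1 (h1.1 hc)
  have hre : e ∈ Residual ES b := mem_residual_of h2.1 hez heb
  refine ⟨hre, ?_, ?_⟩
  · -- (f e).1 ∉ y'
    intro hc
    rcases (h1.2.2 _).mp hc with hb | ⟨e₀, he₀, hey₀, hfe₀⟩
    · exact (f ⟨e, hre⟩).2.1 hb
    · have : (⟨e₀, he₀⟩ : Residual ES b) = ⟨e, hre⟩ :=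
        f.injective (Subtype.ext hfe₀)
      have : e₀ = e := congrArg Subtype.val this
      subst this
      exact hext.1 hey₀
  · intro w
    constructor
    · intro hw
      rcases (h2.2.2 w).mp hw with hb | ⟨e₀, he₀, hez₀, hfe₀⟩
      · exact Or.inr (h1.2.1 hb)
      · rcases (hext.2 e₀).mp hez₀ with rfl | hey₀
        · exact Or.inl (by rw [← hfe₀])
        · exact Or.inr ((h1.2.2 w).mpr (Or.inr ⟨e₀, he₀, hey₀, hfe₀⟩))
    · rintro (rfl | hw)
      · exact (h2.2.2 _).mpr (Or.inr ⟨e, hre, hez, rfl⟩)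
      · rcases (h1.2.2 w).mp hw with hb | ⟨e₀, he₀, hey₀, hfe₀⟩
        · exact (h2.2.2 w).mpr (Or.inl hb)
        · exact (h2.2.2 w).mpr
            (Or.inr ⟨e₀, he₀, (hext.2 e₀).mpr (Or.inr hey₀), hfe₀⟩)

lemma trel_dirAdj {b b' : ES.Config} {f : Residual ES b ≃ Residual ES b'}
    (hflab : ∀ x, lab (f x).1 = lab x.1)
    {y y' z z' : ES.Config} (h1 : TRel b b' f y y') (h2 : TRel b b' f z z')
    (a : A) : dirAdj ES lab y z a ↔ dirAdj ES lab y' z' a := by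
  constructor
  · rintro ⟨e, hext, hlabe⟩
    obtain ⟨hre, hext'⟩ := trel_extends h1 h2 hext
    exact ⟨(f ⟨e, hre⟩).1, hext', by rw [hflab]; exact hlabe⟩
  · rintro ⟨e', hext', hlabe'⟩
    obtain ⟨hre', hext⟩ := trel_extends (trel_symm h1) (trel_symm h2) hext'
    refine ⟨(f.symm ⟨e', hre'⟩).1, hext, ?_⟩
    have h0 := hflab (f.symm ⟨e', hre'⟩)
    rw [Equiv.apply_symm_apply] at h0
    exact h0.symm.trans hlabe'

end Transfer


section Ends

/-- structure of ends of the domain graph: an end is the up-closure of its cluster -/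
lemma end_struct {k : ℕ} {Υ : Set ES.Config}
    (hE : IsEnd ES.configGraph ES.emptyConfig k Υ) :
    ∃ c₀ : ES.Config, (c₀ ∈ Υ ∧ ES.configGraph.dist ES.emptyConfig c₀ = k + 1) ∧
      ∀ y, (y ∈ Υ ↔ ∃ c, (c ∈ Υ ∧ ES.configGraph.dist ES.emptyConfig c = k + 1) ∧
        c.1 ⊆ y.1) := by
  classical
  obtain ⟨x, hx, hΥ⟩ := hE
  -- distances are cardinalities
  have hdist : ∀ z : ES.Config, ES.configGraph.dist ES.emptyConfig z = z.1.card :=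
    fun z => dist_emptyConfig z
  -- key claim : each element of Υ contains a cluster vertex
  have hkey : ∀ y ∈ Υ, ∃ c, (c ∈ Υ ∧ ES.configGraph.dist ES.emptyConfig c = k + 1) ∧
      c.1 ⊆ y.1 := by
    intro y hy
    have hy' := hy
    rw [hΥ] at hy'
    obtain ⟨hky, w, hw⟩ := hy'
    have hcard : k + 1 ≤ y.1.card := by
      have := hdist y; omega
    obtain ⟨c, hcy, hccard⟩ := exists_subconfig y (k + 1) hcard
    obtain ⟨p, _, hps⟩ := exists_chain_walk c y hcy
    have hcdist : ES.configGraph.dist ES.emptyConfig c = k + 1 := by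
      rw [hdist c, hccard]
    refine ⟨c, ⟨?_, hcdist⟩, hcy⟩
    rw [hΥ]
    refine ⟨by omega, w.append p.reverse, ?_⟩
    intro z hz
    rw [SimpleGraph.Walk.support_append] at hz
    rcases List.mem_append.mp hz with hz | hz
    · exact hw z hz
    · have hz' : z ∈ p.reverse.support := List.mem_of_mem_tail hz
      rw [SimpleGraph.Walk.support_reverse, List.mem_reverse] at hz'
      obtain ⟨h1, _⟩ := hps z hz'
      have : k + 1 ≤ z.1.card := by
        calc k + 1 = c.1.card := hccard.symm
        _ ≤ z.1.card := Finset.card_le_card h1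
      rw [hdist z]; omega
  -- cluster vertices are non-empty
  have hxΥ : x ∈ Υ := by
    rw [hΥ]
    refine ⟨hx, SimpleGraph.Walk.nil, ?_⟩
    intro z hz
    simp only [SimpleGraph.Walk.support_nil, List.mem_singleton] at hz
    subst hz; exact hx
  obtain ⟨c₀, hc₀, _⟩ := hkey x hxΥ
  refine ⟨c₀, hc₀, fun y => ⟨hkey y, ?_⟩⟩
  rintro ⟨c, ⟨hcΥ, hcd⟩, hcy⟩
  have hccard : c.1.card = k + 1 := by rw [← hdist c]; exact hcd
  obtain ⟨p, _, hps⟩ := exists_chain_walk c y hcy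
  have hcΥ' := hcΥ
  rw [hΥ] at hcΥ'
  obtain ⟨hkc, w, hw⟩ := hcΥ'
  rw [hΥ]
  constructor
  · have : k + 1 ≤ y.1.card := hccard ▸ Finset.card_le_card hcy
    rw [hdist y]; omega
  · refine ⟨w.append p, ?_⟩
    intro z hz
    rw [SimpleGraph.Walk.support_append] at hz
    rcases List.mem_append.mp hz with hz | hz
    · exact hw z hz
    · have hz' : z ∈ p.support := List.mem_of_mem_tail hz
      obtain ⟨h1, _⟩ := hps z hz'
      have : k + 1 ≤ z.1.card := by
        calc k + 1 = c.1.card := hccard.symm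
        _ ≤ z.1.card := Finset.card_le_card h1
      rw [hdist z]; omega

end Ends


section Main

variable {A : Type*} [Fintype A] [Nonempty A]

set_option maxHeartbeats 1000000 in
lemma end_invariant (ES : EventStructure E) (I : A → A → Prop)
    (hI_irrefl : ∀ a, ¬ I a a) (lab : E → A) (hlab : IsTraceLabeling ES I lab)
    (sreg : Set ES.Config) (hsregFin : sreg.Finite)
    (hsreg : ∀ c : ES.Config, ∃ c' ∈ sreg, ResidualIso ES lab c c')
    (δ : ℕ)
    (hδ : ∀ (k : ℕ) (Υ : Set ES.Config),
      IsEnd ES.configGraph ES.emptyConfig k Υ →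
      ∀ u ∈ endCluster ES.configGraph ES.emptyConfig k Υ,
      ∀ v ∈ endCluster ES.configGraph ES.emptyConfig k Υ,
        ES.configGraph.dist u v ≤ δ) :
    ∃ (ι : ℕ × Set ES.Config → Set ES.Config) (V : Set (Set ES.Config)),
      V.Finite ∧
      (∀ p : ℕ × Set ES.Config,
        IsEnd ES.configGraph ES.emptyConfig p.1 p.2 → ι p ∈ V) ∧
      (∀ p q : ℕ × Set ES.Config,
        IsEnd ES.configGraph ES.emptyConfig p.1 p.2 →
        IsEnd ES.configGraph ES.emptyConfig q.1 q.2 →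
        ι p = ι q → EndIso ES lab p.1 p.2 q.1 q.2) := by
  classical
  set v0 : ES.Config := ES.emptyConfig with hv0
  set G : SimpleGraph ES.Config := ES.configGraph with hGdef
  set B : ℕ := (2 * Fintype.card A + 1) ^ δ with hB
  set R : ℕ := B * δ with hR
  -- cluster of a pair
  set Cl : ℕ × Set ES.Config → Set ES.Config :=
    fun p => {c | c ∈ p.2 ∧ G.dist v0 c = p.1 + 1} with hCl
  -- choice of a cluster vertex and the end-structure property
  have h1 : ∀ p : ℕ × Set ES.Config, ∃ c₀ : ES.Config,
      IsEnd G v0 p.1 p.2 →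
      (c₀ ∈ Cl p ∧ ∀ y, (y ∈ p.2 ↔ ∃ c ∈ Cl p, c.1 ⊆ y.1)) := by
    intro p
    by_cases h : IsEnd G v0 p.1 p.2
    · obtain ⟨c₀, hc₁, hc₂⟩ := end_struct h
      refine ⟨c₀, fun _ => ⟨hc₁, fun y => ?_⟩⟩
      rw [hc₂ y]
      constructor
      · rintro ⟨c, hc, hcy⟩; exact ⟨c, hc, hcy⟩
      · rintro ⟨c, hc, hcy⟩; exact ⟨c, hc, hcy⟩
    · exact ⟨v0, fun hc => absurd hc h⟩
  choose c₀f hc₀f using h1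
  -- the base configuration : intersection of the cluster
  have h2 : ∀ p : ℕ × Set ES.Config, ∃ b : ES.Config,
      b.1 = (c₀f p).1.filter (fun e => ∀ c ∈ Cl p, e ∈ c.1) := by
    intro p
    refine ⟨⟨(c₀f p).1.filter (fun e => ∀ c ∈ Cl p, e ∈ c.1), ?_, ?_⟩, rfl⟩
    · intro e he e' hle
      rw [Finset.mem_filter] at he ⊢
      exact ⟨(c₀f p).2.1 e he.1 e' hle,
        fun c hc => c.2.1 e (he.2 c hc) e' hle⟩
    · intro a ha w hw
      rw [Finset.mem_filter] at ha hw
      exact (c₀f p).2.2 a ha.1 w hw.1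
  choose bf hbf using h2
  -- representative of the residual isomorphism class
  choose cf hcf1 hcf2 using hsreg
  have h3 : ∀ b : ES.Config, ∃ f : Residual ES b ≃ Residual ES (cf b),
      (∀ x y, ES.le x.1 y.1 ↔ ES.le (f x).1 (f y).1) ∧
      (∀ x y, ES.conflict x.1 y.1 ↔ ES.conflict (f x).1 (f y).1) ∧
      (∀ x, lab (f x).1 = lab x.1) := fun b => hcf2 b
  choose ff hff using h3
  have hffle := fun b => (hff b).1
  have hffconf := fun b => (hff b).2.1
  have hfflab := fun b => (hff b).2.2
  -- the transfer map
  have h4 : ∀ (b y : ES.Config), ∃ y',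
      b.1 ⊆ y.1 → TRel b (cf b) (ff b) y y' := by
    intro b y
    by_cases h : b.1 ⊆ y.1
    · obtain ⟨y', hy'⟩ := trel_exists (ff b) (hffle b) (hffconf b) y h
      exact ⟨y', fun _ => hy'⟩
    · exact ⟨y, fun hc => absurd hc h⟩
  choose Φf hΦf using h4
  -- finite balls of radius R
  have h5 : ∀ c' : ES.Config, ∃ t : Finset ES.Config,
      t.card ≤ (2 * Fintype.card A + 1) ^ R ∧
      ∀ z, ∀ p : G.Walk c' z, p.length ≤ R → z ∈ t :=
    fun c' => ball_bounded hI_irrefl hlab c' R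
  choose ballR hballRcard hballR using h5
  -- finite balls of radius δ
  have h6 : ∀ c' : ES.Config, ∃ t : Finset ES.Config,
      t.card ≤ B ∧ ∀ z, ∀ p : G.Walk c' z, p.length ≤ δ → z ∈ t :=
    fun c' => ball_bounded hI_irrefl hlab c' δ
  choose ballδ hballδcard hballδ using h6
  -- the invariant
  set ι : ℕ × Set ES.Config → Set ES.Config :=
    fun p => (fun c => Φf (bf p) c) '' Cl p with hι
  set V : Set (Set ES.Config) :=
    ⋃ c' ∈ sreg, {v : Set ES.Config | v ⊆ ↑(ballR c')} with hV
  refine ⟨ι, V, ?_, ?_, ?_⟩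
  · -- V is finite
    apply Set.Finite.biUnion hsregFin
    intro c' _
    exact Set.Finite.finite_subsets (ballR c').finite_toSet
  · -- the invariant of an end lies in V
    intro p hE
    obtain ⟨hc₀cl, hstruct⟩ := hc₀f p hE
    have hdistcard : ∀ z : ES.Config, G.dist v0 z = z.1.card :=
      fun z => dist_emptyConfig z
    have hcardCl : ∀ c ∈ Cl p, c.1.card = p.1 + 1 := by
      intro c hc
      have := hdistcard c
      rw [hc.2] at this
      omega
    have hbsub : ∀ c ∈ Cl p, (bf p).1 ⊆ c.1 := by
      intro c hc e he
      rw [hbf p, Finset.mem_filter] at he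
      exact he.2 c hc
    have hbc₀ : (bf p).1 ⊆ (c₀f p).1 := by
      rw [hbf p]; exact Finset.filter_subset _ _
    have hclball : ∀ c ∈ Cl p, c ∈ ballδ (c₀f p) := by
      intro c hc
      have hd : G.dist (c₀f p) c ≤ δ :=
        hδ p.1 p.2 hE (c₀f p) ⟨hc₀cl.1, hc₀cl.2⟩ c ⟨hc.1, hc.2⟩
      obtain ⟨w, hw⟩ := (reachable_all (c₀f p) c).exists_walk_length_eq_dist
      exact hballδ _ c w (by rw [hw]; exact hd)
    have hc₀b : ((c₀f p).1 \ (bf p).1).card ≤ R := by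
      set ClF : Finset ES.Config :=
        (ballδ (c₀f p)).filter (fun c => c ∈ Cl p) with hClF
      have hsub : (c₀f p).1 \ (bf p).1 ⊆ ClF.biUnion (fun c => (c₀f p).1 \ c.1) := by
        intro e he
        rw [Finset.mem_sdiff] at he
        obtain ⟨he1, he2⟩ := he
        rw [hbf p, Finset.mem_filter] at he2
        push_neg at he2
        obtain ⟨c, hc, hec⟩ := he2 he1
        exact Finset.mem_biUnion.mpr ⟨c, Finset.mem_filter.mpr ⟨hclball c hc, hc⟩,
          Finset.mem_sdiff.mpr ⟨he1, hec⟩⟩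
      calc ((c₀f p).1 \ (bf p).1).card
          ≤ (ClF.biUnion (fun c => (c₀f p).1 \ c.1)).card := Finset.card_le_card hsub
      _ ≤ ∑ c ∈ ClF, ((c₀f p).1 \ c.1).card := Finset.card_biUnion_le
      _ ≤ ∑ c ∈ ClF, δ := by
          apply Finset.sum_le_sum
          intro c hc
          have hcCl : c ∈ Cl p := (Finset.mem_filter.mp hc).2
          have hd : G.dist (c₀f p) c ≤ δ :=
            hδ p.1 p.2 hE (c₀f p) ⟨hc₀cl.1, hc₀cl.2⟩ c ⟨hcCl.1, hcCl.2⟩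
          have hsd := sd_le_dist (ES := ES) (c₀f p) c
          rw [← hGdef] at hsd
          unfold sd at hsd
          omega
      _ = ClF.card * δ := by rw [Finset.sum_const, smul_eq_mul]
      _ ≤ B * δ := by
          apply Nat.mul_le_mul_right
          calc ClF.card ≤ (ballδ (c₀f p)).card :=
            Finset.card_le_card (Finset.filter_subset _ _)
          _ ≤ B := hballδcard _
      _ = R := hR.symm
    rw [hV]
    apply Set.mem_biUnion (hcf1 (bf p))
    intro z hz
    obtain ⟨c, hc, rfl⟩ := hz
    have htr : TRel (bf p) (cf (bf p)) (ff (bf p)) c (Φf (bf p) c) :=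
      hΦf _ _ (hbsub c hc)
    obtain ⟨w, hwlen, -⟩ := exists_chain_walk (cf (bf p)) (Φf (bf p) c) htr.2.1
    refine Finset.mem_coe.mpr (hballR _ _ w ?_)
    rw [hwlen]
    have hcard := trel_card htr
    have h1 : ((Φf (bf p) c).1 \ (cf (bf p)).1).card = (c.1 \ (bf p).1).card := hcard
    rw [h1, Finset.card_sdiff_of_subset (hbsub c hc)]
    have h2 : ((c₀f p).1 \ (bf p).1).card = (c₀f p).1.card - (bf p).1.card :=
      Finset.card_sdiff_of_subset hbc₀
    have h3 : (bf p).1.card ≤ (c₀f p).1.card := Finset.card_le_card hbc₀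
    have h4 := hcardCl c hc
    have h5 := hcardCl (c₀f p) hc₀cl
    omega
  · -- equal invariants give end-isomorphisms
    intro p q hEp hEq hpq
    have hbsub : ∀ r : ℕ × Set ES.Config, ∀ c ∈ Cl r, (bf r).1 ⊆ c.1 := by
      intro r c hc e he
      rw [hbf r, Finset.mem_filter] at he
      exact he.2 c hc
    have htr : ∀ r : ℕ × Set ES.Config, ∀ y : ES.Config, (∃ c ∈ Cl r, c.1 ⊆ y.1) →
        TRel (bf r) (cf (bf r)) (ff (bf r)) y (Φf (bf r) y) := by
      rintro r y ⟨c, hc, hcy⟩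
      exact hΦf _ _ ((hbsub r c hc).trans hcy)
    have hst : ∀ r, IsEnd G v0 r.1 r.2 → ∀ y, y ∈ r.2 ↔ ∃ c ∈ Cl r, c.1 ⊆ y.1 :=
      fun r hE => (hc₀f r hE).2
    have hsymle : ∀ b : ES.Config, ∀ x y : Residual ES (cf b),
        ES.le x.1 y.1 ↔ ES.le ((ff b).symm x).1 ((ff b).symm y).1 := by
      intro b x y
      have h := hffle b ((ff b).symm x) ((ff b).symm y)
      rw [Equiv.apply_symm_apply, Equiv.apply_symm_apply] at h
      exact h.symm
    have hsymconf : ∀ b : ES.Config, ∀ x y : Residual ES (cf b),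
        ES.conflict x.1 y.1 ↔ ES.conflict ((ff b).symm x).1 ((ff b).symm y).1 := by
      intro b x y
      have h := hffconf b ((ff b).symm x) ((ff b).symm y)
      rw [Equiv.apply_symm_apply, Equiv.apply_symm_apply] at h
      exact h.symm
    have hpre : ∀ r : ℕ × Set ES.Config, ∀ w : ES.Config, (∃ d ∈ ι r, d.1 ⊆ w.1) →
        ∃ y, TRel (bf r) (cf (bf r)) (ff (bf r)) y w := by
      rintro r w ⟨d, hd, hdw⟩
      simp only [hι, Set.mem_image] at hd
      obtain ⟨c, hc, rfl⟩ := hd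
      have htrc := htr r c ⟨c, hc, Finset.Subset.refl _⟩
      have hcw : (cf (bf r)).1 ⊆ w.1 := htrc.2.1.trans hdw
      obtain ⟨y, hy⟩ := trel_exists ((ff (bf r)).symm) (hsymle (bf r)) (hsymconf (bf r)) w hcw
      have h2 := trel_symm hy
      rw [Equiv.symm_symm] at h2
      exact ⟨y, h2⟩
    have hback : ∀ r, IsEnd G v0 r.1 r.2 → ∀ y w,
        TRel (bf r) (cf (bf r)) (ff (bf r)) y w →
        (∃ d ∈ ι r, d.1 ⊆ w.1) → y ∈ r.2 := by
      rintro r hE y w htrw ⟨d, hd, hdw⟩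
      simp only [hι, Set.mem_image] at hd
      obtain ⟨c, hc, rfl⟩ := hd
      have htrc := htr r c ⟨c, hc, Finset.Subset.refl _⟩
      have hcy : c.1 ⊆ y.1 := trel_subset (trel_symm htrc) (trel_symm htrw) hdw
      exact (hst r hE y).mpr ⟨c, hc, hcy⟩
    have huniqb : ∀ r : ℕ × Set ES.Config, ∀ y y' w : ES.Config,
        TRel (bf r) (cf (bf r)) (ff (bf r)) y w →
        TRel (bf r) (cf (bf r)) (ff (bf r)) y' w → y = y' :=
      fun r y y' w h1 h2 => trel_unique (trel_symm h1) (trel_symm h2)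
    have hdet : ∀ r : ℕ × Set ES.Config, ∀ y, (∃ c ∈ Cl r, c.1 ⊆ y.1) →
        (y ∈ Cl r ↔ Φf (bf r) y ∈ ι r) := by
      intro r y hy
      constructor
      · intro h
        exact Set.mem_image_of_mem _ h
      · intro h
        simp only [hι, Set.mem_image] at h
        obtain ⟨c, hc, heq⟩ := h
        have h1 := htr r c ⟨c, hc, Finset.Subset.refl _⟩
        have h2 := htr r y hy
        rw [heq] at h1
        have := huniqb r c y _ h1 h2
        exact this ▸ hc
    -- map p → q
    have hgex : ∀ y : ES.Config, ∃ y₂, y ∈ p.2 →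
        (TRel (bf q) (cf (bf q)) (ff (bf q)) y₂ (Φf (bf p) y) ∧ y₂ ∈ q.2) := by
      intro y
      by_cases hy : y ∈ p.2
      · have hyc := (hst p hEp y).mp hy
        have htry := htr p y hyc
        have himg : ∃ d ∈ ι q, d.1 ⊆ (Φf (bf p) y).1 := by
          rw [← hpq]
          obtain ⟨c, hc, hcy⟩ := hyc
          refine ⟨Φf (bf p) c, Set.mem_image_of_mem _ hc, ?_⟩
          exact trel_subset (htr p c ⟨c, hc, Finset.Subset.refl _⟩) htry hcy
        obtain ⟨y₂, hy₂⟩ := hpre q _ himg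
        exact ⟨y₂, fun _ => ⟨hy₂, hback q hEq y₂ _ hy₂ himg⟩⟩
      · exact ⟨y, fun hc => absurd hc hy⟩
    choose gf hgf using hgex
    -- map q → p
    have hhex : ∀ y : ES.Config, ∃ y₁, y ∈ q.2 →
        (TRel (bf p) (cf (bf p)) (ff (bf p)) y₁ (Φf (bf q) y) ∧ y₁ ∈ p.2) := by
      intro y
      by_cases hy : y ∈ q.2
      · have hyc := (hst q hEq y).mp hy
        have htry := htr q y hyc
        have himg : ∃ d ∈ ι p, d.1 ⊆ (Φf (bf q) y).1 := by
          rw [hpq]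
          obtain ⟨c, hc, hcy⟩ := hyc
          refine ⟨Φf (bf q) c, Set.mem_image_of_mem _ hc, ?_⟩
          exact trel_subset (htr q c ⟨c, hc, Finset.Subset.refl _⟩) htry hcy
        obtain ⟨y₁, hy₁⟩ := hpre p _ himg
        exact ⟨y₁, fun _ => ⟨hy₁, hback p hEp y₁ _ hy₁ himg⟩⟩
      · exact ⟨y, fun hc => absurd hc hy⟩
    choose hf hhf using hhex
    -- consistency
    have hΦg : ∀ y ∈ p.2, Φf (bf q) (gf y) = Φf (bf p) y := by
      intro y hy
      obtain ⟨h1, h2⟩ := hgf y hy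
      exact trel_unique (htr q (gf y) ((hst q hEq _).mp h2)) h1
    have hΦh : ∀ y ∈ q.2, Φf (bf p) (hf y) = Φf (bf q) y := by
      intro y hy
      obtain ⟨h1, h2⟩ := hhf y hy
      exact trel_unique (htr p (hf y) ((hst p hEp _).mp h2)) h1
    have hgh : ∀ y ∈ p.2, hf (gf y) = y := by
      intro y hy
      obtain ⟨h1, h2⟩ := hgf y hy
      obtain ⟨h3, h4⟩ := hhf (gf y) h2
      rw [hΦg y hy] at h3
      exact huniqb p _ _ _ h3 (htr p y ((hst p hEp y).mp hy))
    have hhg : ∀ y ∈ q.2, gf (hf y) = y := by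
      intro y hy
      obtain ⟨h1, h2⟩ := hhf y hy
      obtain ⟨h3, h4⟩ := hgf (hf y) h2
      rw [hΦh y hy] at h3
      exact huniqb q _ _ _ h3 (htr q y ((hst q hEq y).mp hy))
    refine ⟨⟨fun x => ⟨gf x.1, (hgf x.1 x.2).2⟩, fun z => ⟨hf z.1, (hhf z.1 z.2).2⟩,
      ?_, ?_⟩, ?_, ?_⟩
    · intro x
      exact Subtype.ext (hgh x.1 x.2)
    · intro z
      exact Subtype.ext (hhg z.1 z.2)
    · intro x y a
      have t1 := trel_dirAdj (hfflab (bf p)) (htr p x.1 ((hst p hEp _).mp x.2))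
        (htr p y.1 ((hst p hEp _).mp y.2)) a
      have t2 := trel_dirAdj (hfflab (bf q)) ((hgf x.1 x.2).1) ((hgf y.1 y.2).1) a
      exact t1.trans t2.symm
    · intro x
      constructor
      · intro hx
        have hxCl : x.1 ∈ Cl p := ⟨x.2, hx⟩
        have h1 : Φf (bf p) x.1 ∈ ι p := (hdet p x.1 ((hst p hEp _).mp x.2)).mp hxCl
        have h2 : Φf (bf q) (gf x.1) ∈ ι q := by
          rw [hΦg x.1 x.2, ← hpq]
          exact h1
        have h3 := (hdet q (gf x.1) ((hst q hEq _).mp (hgf x.1 x.2).2)).mpr h2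
        exact h3.2
      · intro hx
        have hxCl : gf x.1 ∈ Cl q := ⟨(hgf x.1 x.2).2, hx⟩
        have h1 : Φf (bf q) (gf x.1) ∈ ι q :=
          (hdet q (gf x.1) ((hst q hEq _).mp (hgf x.1 x.2).2)).mp hxCl
        have h2 : Φf (bf p) x.1 ∈ ι p := by
          rw [hΦg x.1 x.2] at h1
          rw [hpq]
          exact h1
        have h3 := (hdet p x.1 ((hst p hEp _).mp x.2)).mpr h2
        exact h3.2

end Main

end Stmt16Aux
/-- For a regular `M`-labeled (trace-regular) event structure
whose clusters have uniformly bounded diameter, the directed labeled graph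
`Ḡ(E)` is a context-free graph. -/
theorem stmt16 {E A : Type*} [Fintype A] [Nonempty A]
    (ES : EventStructure E) (I : A → A → Prop)
    (hI_irrefl : ∀ a, ¬ I a a) (hI_symm : ∀ a b, I a b → I b a)
    (lab : E → A)
    (hlab : IsTraceLabeling ES I lab)
    (hreg : RegularLabeled ES lab)
    (hbound : ∃ δ : ℕ, ∀ (k : ℕ) (Υ : Set ES.Config),
      IsEnd ES.configGraph ES.emptyConfig k Υ →
      ∀ u ∈ endCluster ES.configGraph ES.emptyConfig k Υ,
      ∀ v ∈ endCluster ES.configGraph ES.emptyConfig k Υ,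
        ES.configGraph.dist u v ≤ δ) :
    ContextFreeGraph ES lab := by
  classical
  obtain ⟨δ, hδ⟩ := hbound
  obtain ⟨sreg, hsregFin, hsreg⟩ := hreg
  obtain ⟨ι, V, hVfin, hmemV, hiso⟩ :=
    Stmt16Aux.end_invariant ES I hI_irrefl lab hlab sreg hsregFin hsreg δ hδ
  set rep : Set ES.Config → ℕ × Set ES.Config := fun v =>
    if h : ∃ p : ℕ × Set ES.Config,
        IsEnd ES.configGraph ES.emptyConfig p.1 p.2 ∧ ι p = v
    then h.choose else (0, ∅) with hrep
  refine ⟨rep '' {v ∈ V | ∃ p : ℕ × Set ES.Config,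
      IsEnd ES.configGraph ES.emptyConfig p.1 p.2 ∧ ι p = v}, ?_, ?_⟩
  · exact Set.Finite.image _ (hVfin.subset (Set.sep_subset _ _))
  · intro k Υ hE
    have hex : ∃ p : ℕ × Set ES.Config,
        IsEnd ES.configGraph ES.emptyConfig p.1 p.2 ∧ ι p = ι (k, Υ) :=
      ⟨(k, Υ), hE, rfl⟩
    refine ⟨rep (ι (k, Υ)),
      Set.mem_image_of_mem _ ⟨hmemV (k, Υ) hE, hex⟩, ?_, ?_⟩
    · rw [hrep]
      simp only [dif_pos hex]
      exact hex.choose_spec.1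
    · rw [hrep]
      simp only [dif_pos hex]
      exact hiso (k, Υ) hex.choose hE hex.choose_spec.1 hex.choose_spec.2.symm
end

section
/- Let E be an event structure of finite degree. If the graph G(E) is hyperbolic, then E is grid-free. -/
/-- A graph is hyperbolic: the Gromov four-point condition holds for some
constant `δ`. -/
abbrev GraphHyperbolic {V : Type*} (G : SimpleGraph V) : Prop :=
  ∃ δ : ℕ, ∀ a b c d : V,
    G.dist a b + G.dist c d ≤
      max (G.dist a c + G.dist b d) (G.dist a d + G.dist b c) + 2 * δ

/-- Strict causality. -/
abbrev EventStructure.lt' {E : Type*} (ES : EventStructure E) (e e' : E) : Prop :=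
  ES.le e e' ∧ e ≠ e'

/-- An event structure is grid-free (in the sense of Thiagarajan–Yang). -/
abbrev GridFree {E : Type*} (ES : EventStructure E) : Prop :=
  ¬ ∃ (x y : ℕ → E) (g : ℕ → ℕ → E),
      (∀ i, ES.lt' (x i) (x (i + 1))) ∧
      (∀ j, ES.lt' (y j) (y (j + 1))) ∧
      (∀ i j, x i ≠ y j) ∧
      (∀ i j, ES.Concurrent (x i) (y j)) ∧
      (∀ i j i' j', g i j = g i' j' → i = i' ∧ j = j') ∧
      (∀ i j i', g i j ≠ x i') ∧
      (∀ i j j', g i j ≠ y j') ∧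
      (∀ i j, ES.lt' (x i) (g i j) ∧ ES.lt' (y j) (g i j)) ∧
      (∀ i j i', i < i' → ¬ ES.lt' (x i') (g i j)) ∧
      (∀ i j j', j < j' → ¬ ES.lt' (y j') (g i j))

section AuxLemmas
open scoped Classical

variable {E : Type*} (ES : EventStructure E)

/-- Finset of causes of an event. -/
noncomputable def EventStructure.down (e : E) : Finset E :=
  (ES.finite_cause e).toFinset

lemma EventStructure.mem_down {e f : E} : f ∈ ES.down e ↔ ES.le f e := by
  simp [EventStructure.down]

/-- Every nonempty finite set has a maximal element w.r.t. causality. -/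
lemma EventStructure.exists_maximal (s : Finset E) (hs : s.Nonempty) :
    ∃ e ∈ s, ∀ f ∈ s, ES.le e f → e = f := by
  classical
  induction s using Finset.strongInduction with
  | _ s ih =>
    obtain ⟨e₀, he₀⟩ := hs
    by_cases h : ∃ f ∈ s, ES.le e₀ f ∧ f ≠ e₀
    · set t := s.filter (fun f => ES.le e₀ f ∧ f ≠ e₀) with ht
      have hte : e₀ ∉ t := by simp [ht]
      have hts : t ⊂ s := by
        refine Finset.ssubset_iff_of_subset (Finset.filter_subset _ _) |>.mpr ⟨e₀, he₀, hte⟩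
      obtain ⟨f₀, hf₀, hf₀s⟩ := h
      have htne : t.Nonempty := ⟨f₀, by simp [ht, hf₀, hf₀s]⟩
      obtain ⟨e, het, hemax⟩ := ih t hts htne
      rw [ht, Finset.mem_filter] at het
      refine ⟨e, het.1, fun f hf hef => ?_⟩
      by_cases hfe : f = e₀
      · exact absurd (ES.le_antisymm _ _ (hfe ▸ hef) (het.2.1)) het.2.2
      · exact hemax f (by simp [ht, hf, ES.le_trans _ _ _ het.2.1 hef, hfe]) hef
    · push_neg at h
      exact ⟨e₀, he₀, fun f hf hef => ((h f hf hef).symm)⟩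

/-- If `c ⊆ c'` are configurations, there is a walk between them of length
`(c'.1 \ c.1).card`. -/
lemma EventStructure.exists_walk_of_subset (c c' : ES.Config) (h : c.1 ⊆ c'.1) :
    ∃ w : ES.configGraph.Walk c c', w.length = (c'.1 \ c.1).card := by
  classical
  obtain ⟨s, hs⟩ : ∃ s, s = c'.1 \ c.1 := ⟨_, rfl⟩
  induction s using Finset.strongInduction generalizing c' with
  | _ s ih =>
    by_cases hne : (c'.1 \ c.1).Nonempty
    · obtain ⟨e, hes, hemax⟩ := ES.exists_maximal _ hne
      have hec' : e ∈ c'.1 := (Finset.mem_sdiff.mp hes).1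
      have hec : e ∉ c.1 := (Finset.mem_sdiff.mp hes).2
      -- c'' = c'.erase e is a configuration
      have hcfg : ES.IsConfig (c'.1.erase e) := by
        constructor
        · intro a ha b hba
          have hac' : a ∈ c'.1 := Finset.mem_of_mem_erase ha
          have hbc' : b ∈ c'.1 := c'.2.1 a hac' b hba
          rw [Finset.mem_erase]
          refine ⟨fun hbe => ?_, hbc'⟩
          -- b = e; then e ≤ a, a ∈ c', a ≠ e
          subst hbe
          have hane : a ≠ b := (Finset.mem_erase.mp ha).1
          have has : a ∈ c'.1 \ c.1 := by
            rw [Finset.mem_sdiff]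
            refine ⟨hac', fun hac => hec (c.2.1 a hac b hba)⟩
          exact hane (hemax a has hba).symm
        · intro a ha b hb
          exact c'.2.2 a (Finset.mem_of_mem_erase ha) b (Finset.mem_of_mem_erase hb)
      set c'' : ES.Config := ⟨c'.1.erase e, hcfg⟩ with hc''
      have hadj : ES.configGraph.Adj c'' c' := by
        left
        refine ⟨e, Finset.notMem_erase _ _, fun x => ?_⟩
        constructor
        · intro hx
          by_cases hxe : x = e
          · exact Or.inl hxe
          · exact Or.inr (Finset.mem_erase.mpr ⟨hxe, hx⟩)
        · rintro (rfl | hx)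
          · exact hec'
          · exact Finset.mem_of_mem_erase hx
      have hsub : c.1 ⊆ c''.1 := fun a ha =>
        Finset.mem_erase.mpr ⟨fun hae => hec (hae ▸ ha), h ha⟩
      have hdiff : c''.1 \ c.1 = (c'.1 \ c.1).erase e := by
        ext a
        simp only [hc'', Finset.mem_sdiff, Finset.mem_erase]
        tauto
      have hss : (c'.1 \ c.1).erase e ⊂ c'.1 \ c.1 := Finset.erase_ssubset hes
      obtain ⟨w, hw⟩ := ih _ (hs ▸ hss) c'' hsub hdiff.symm
      refine ⟨w.concat hadj, ?_⟩
      rw [SimpleGraph.Walk.length_concat, hw, hdiff,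
        Finset.card_erase_of_mem hes]
      have : 0 < (c'.1 \ c.1).card := Finset.card_pos.mpr hne
      omega
    · rw [Finset.not_nonempty_iff_eq_empty, Finset.sdiff_eq_empty_iff_subset] at hne
      have : c = c' := Subtype.ext (Finset.Subset.antisymm h hne)
      subst this
      refine ⟨SimpleGraph.Walk.nil, ?_⟩
      simp

/-- Any walk between two configurations is at least as long as the size of their
symmetric difference. -/
lemma EventStructure.length_walk_ge (c c' : ES.Config)
    (w : ES.configGraph.Walk c c') :
    ((c.1 \ c'.1) ∪ (c'.1 \ c.1)).card ≤ w.length := by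
  classical
  induction w with
  | nil => simp
  | @cons u v x hadj p ih =>
    have hone : ((u.1 \ v.1) ∪ (v.1 \ u.1)).card = 1 := by
      have key : ∀ a b : ES.Config, ES.Covers a b →
          ((a.1 \ b.1) ∪ (b.1 \ a.1)).card = 1 := by
        rintro a b ⟨e, hea, hmem⟩
        have hb : b.1 = insert e a.1 := by
          ext z; simp [hmem z]
        have : (a.1 \ b.1) ∪ (b.1 \ a.1) = {e} := by
          rw [hb]
          ext z
          simp only [Finset.mem_union, Finset.mem_sdiff, Finset.mem_insert,
            Finset.mem_singleton]
          constructor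
          · rintro (⟨hz, hz'⟩ | ⟨(rfl | hz), hz'⟩) <;> tauto
          · rintro rfl; tauto
        rw [this, Finset.card_singleton]
      rcases hadj with hcov | hcov
      · exact key _ _ hcov
      · rw [Finset.union_comm]; exact key _ _ hcov
    have htri : ((u.1 \ x.1) ∪ (x.1 \ u.1)).card ≤
        ((u.1 \ v.1) ∪ (v.1 \ u.1)).card + ((v.1 \ x.1) ∪ (x.1 \ v.1)).card := by
      refine Nat.le_trans (Finset.card_le_card ?_) (Finset.card_union_le _ _)
      intro z hz
      simp only [Finset.mem_union, Finset.mem_sdiff] at *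
      by_cases hzv : z ∈ v.1 <;> tauto
    rw [SimpleGraph.Walk.length_cons]
    omega

/-- Distance lower bound by symmetric difference. -/
lemma EventStructure.dist_ge (c c' : ES.Config)
    (h : ES.configGraph.Reachable c c') :
    ((c.1 \ c'.1) ∪ (c'.1 \ c.1)).card ≤ ES.configGraph.dist c c' := by
  obtain ⟨w, hw⟩ := h.exists_walk_length_eq_dist
  exact hw ▸ ES.length_walk_ge c c' w

end AuxLemmas

set_option maxHeartbeats 2000000 in
/-- If an event structure of finite degree has a hyperbolic
domain graph `G(E)`, then it is grid-free. -/
theorem stmt17 {E : Type*} (ES : EventStructure E) (d : ℕ)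
    (hdeg : ∀ (c : ES.Config) (s : Finset E),
      (∀ e ∈ s, ES.Enabled c e) → s.card ≤ d)
    (hhyp : GraphHyperbolic ES.configGraph) :
    GridFree ES := by
  classical
  rintro ⟨x, y, g, hx, hy, -, hconc, -, -, -, -, -, -⟩
  obtain ⟨δ, hδ⟩ := hhyp
  set n : ℕ := δ + 1 with hn
  -- monotonicity of the chains
  have hmonox : ∀ i j : ℕ, i ≤ j → ES.le (x i) (x j) := by
    intro i j hij
    induction j, hij using Nat.le_induction with
    | base => exact ES.le_refl _
    | succ k hk ih => exact ES.le_trans _ _ _ ih (hx k).1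
  have hmonoy : ∀ i j : ℕ, i ≤ j → ES.le (y i) (y j) := by
    intro i j hij
    induction j, hij using Nat.le_induction with
    | base => exact ES.le_refl _
    | succ k hk ih => exact ES.le_trans _ _ _ ih (hy k).1
  have hstrictx : ∀ i j : ℕ, i < j → ¬ ES.le (x j) (x i) := by
    intro i j hij h
    have h1 : ES.le (x (i + 1)) (x j) := hmonox _ _ hij
    exact (hx i).2 (ES.le_antisymm _ _ (hx i).1 (ES.le_trans _ _ _ h1 h))
  have hstricty : ∀ i j : ℕ, i < j → ¬ ES.le (y j) (y i) := by
    intro i j hij h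
    have h1 : ES.le (y (i + 1)) (y j) := hmonoy _ _ hij
    exact (hy i).2 (ES.le_antisymm _ _ (hy i).1 (ES.le_trans _ _ _ h1 h))
  have hxinj : Function.Injective x := by
    intro i j hij
    rcases lt_trichotomy i j with h | h | h
    · exact absurd (hij ▸ ES.le_refl (x j)) (hstrictx i j h)
    · exact h
    · exact absurd (hij ▸ ES.le_refl (x j)) fun hh => hstrictx j i h hh
  have hyinj : Function.Injective y := by
    intro i j hij
    rcases lt_trichotomy i j with h | h | h
    · exact absurd (hij ▸ ES.le_refl (y j)) (hstricty i j h)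
    · exact h
    · exact absurd (hij ▸ ES.le_refl (y j)) fun hh => hstricty j i h hh
  -- no conflict below concurrent events
  have hnc : ∀ u v p q : E, ES.le u p → ES.le v q → ¬ ES.conflict p q →
      ¬ ES.conflict u v := by
    intro u v p q hup hvq hpq hc
    exact hpq (ES.conflict_symm _ _
      (ES.conflict_le _ _ _ (ES.conflict_symm _ _ (ES.conflict_le _ _ _ hc hvq)) hup))
  -- configurations
  have hcfg : ∀ i j : ℕ, ES.IsConfig (ES.down (x i) ∪ ES.down (y j)) := by
    intro i j
    constructor
    · intro e he f hf
      rcases Finset.mem_union.mp he with he | he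
      · exact Finset.mem_union_left _ ((ES.mem_down).mpr
          (ES.le_trans _ _ _ hf ((ES.mem_down).mp he)))
      · exact Finset.mem_union_right _ ((ES.mem_down).mpr
          (ES.le_trans _ _ _ hf ((ES.mem_down).mp he)))
    · intro e he f hf
      rcases Finset.mem_union.mp he with he | he <;>
        rcases Finset.mem_union.mp hf with hf | hf
      · exact hnc _ _ _ _ ((ES.mem_down).mp he) ((ES.mem_down).mp hf)
          (ES.conflict_irrefl _)
      · exact hnc _ _ _ _ ((ES.mem_down).mp he) ((ES.mem_down).mp hf)
          (hconc i j).2.2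
      · exact hnc _ _ _ _ ((ES.mem_down).mp he) ((ES.mem_down).mp hf)
          (fun hc => (hconc i j).2.2 (ES.conflict_symm _ _ hc))
      · exact hnc _ _ _ _ ((ES.mem_down).mp he) ((ES.mem_down).mp hf)
          (ES.conflict_irrefl _)
  set A0 : Finset E := ES.down (x 0) with hA0
  set A1 : Finset E := ES.down (x n) with hA1
  set B0 : Finset E := ES.down (y 0) with hB0
  set B1 : Finset E := ES.down (y n) with hB1
  have hA : A0 ⊆ A1 := fun e he =>
    (ES.mem_down).mpr (ES.le_trans _ _ _ ((ES.mem_down).mp he) (hmonox 0 n (Nat.zero_le _)))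
  have hB : B0 ⊆ B1 := fun e he =>
    (ES.mem_down).mpr (ES.le_trans _ _ _ ((ES.mem_down).mp he) (hmonoy 0 n (Nat.zero_le _)))
  set S : Finset E := A1 \ (A0 ∪ B1) with hSdef
  set T : Finset E := B1 \ (B0 ∪ A1) with hTdef
  set M : Finset E := (A1 ∩ B1) \ (A0 ∪ B0) with hMdef
  -- cardinality lower bounds on S and T
  have hScard : n ≤ S.card := by
    have hsub : (Finset.Icc 1 n).image x ⊆ S := by
      intro z hz
      obtain ⟨k, hk, rfl⟩ := Finset.mem_image.mp hz
      rw [Finset.mem_Icc] at hk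
      rw [hSdef, Finset.mem_sdiff, Finset.mem_union]
      refine ⟨(ES.mem_down).mpr (hmonox k n hk.2), ?_⟩
      push_neg
      constructor
      · rw [hA0, ES.mem_down]
        exact hstrictx 0 k hk.1
      · rw [hB1, ES.mem_down]
        exact fun h => (hconc k n).1 h
    calc n = (Finset.Icc 1 n).card := by rw [Nat.card_Icc]; omega
      _ = ((Finset.Icc 1 n).image x).card := (Finset.card_image_of_injective _ hxinj).symm
      _ ≤ S.card := Finset.card_le_card hsub
  have hTcard : n ≤ T.card := by
    have hsub : (Finset.Icc 1 n).image y ⊆ T := by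
      intro z hz
      obtain ⟨k, hk, rfl⟩ := Finset.mem_image.mp hz
      rw [Finset.mem_Icc] at hk
      rw [hTdef, Finset.mem_sdiff, Finset.mem_union]
      refine ⟨(ES.mem_down).mpr (hmonoy k n hk.2), ?_⟩
      push_neg
      constructor
      · rw [hB0, ES.mem_down]
        exact hstricty 0 k hk.1
      · rw [hA1, ES.mem_down]
        exact fun h => (hconc n k).2.1 h
    calc n = (Finset.Icc 1 n).card := by rw [Nat.card_Icc]; omega
      _ = ((Finset.Icc 1 n).image y).card := (Finset.card_image_of_injective _ hyinj).symm
      _ ≤ T.card := Finset.card_le_card hsub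
  -- the four configurations
  set a : ES.Config := ⟨A0 ∪ B0, hcfg 0 0⟩ with ha
  set b : ES.Config := ⟨A1 ∪ B1, hcfg n n⟩ with hb
  set c : ES.Config := ⟨A1 ∪ B0, hcfg n 0⟩ with hc
  set e : ES.Config := ⟨A0 ∪ B1, hcfg 0 n⟩ with he'
  have hav : a.1 = A0 ∪ B0 := rfl
  have hbv : b.1 = A1 ∪ B1 := rfl
  have hcv : c.1 = A1 ∪ B0 := rfl
  have hev : e.1 = A0 ∪ B1 := rfl
  -- membership facts for tauto
  have hAe : ∀ z : E, z ∈ A0 → z ∈ A1 := fun z hz => hA hz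
  have hBe : ∀ z : E, z ∈ B0 → z ∈ B1 := fun z hz => hB hz
  -- set identities
  have h1 : b.1 \ a.1 = S ∪ T ∪ M := by
    rw [hbv, hav, hSdef, hTdef, hMdef]
    ext z
    have := hAe z; have := hBe z
    simp only [Finset.mem_sdiff, Finset.mem_union, Finset.mem_inter]
    tauto
  have h2 : c.1 \ e.1 = S := by
    rw [hcv, hev, hSdef]
    ext z
    have := hAe z; have := hBe z
    simp only [Finset.mem_sdiff, Finset.mem_union]
    tauto
  have h3 : e.1 \ c.1 = T := by
    rw [hcv, hev, hTdef]
    ext z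
    have := hAe z; have := hBe z
    simp only [Finset.mem_sdiff, Finset.mem_union]
    tauto
  have h4 : c.1 \ a.1 = S ∪ M := by
    rw [hcv, hav, hSdef, hMdef]
    ext z
    have := hAe z; have := hBe z
    simp only [Finset.mem_sdiff, Finset.mem_union, Finset.mem_inter]
    tauto
  have h5 : e.1 \ a.1 = T ∪ M := by
    rw [hev, hav, hTdef, hMdef]
    ext z
    have := hAe z; have := hBe z
    simp only [Finset.mem_sdiff, Finset.mem_union, Finset.mem_inter]
    tauto
  have h6 : b.1 \ e.1 = S := by
    rw [hbv, hev, hSdef]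
    ext z
    have := hAe z; have := hBe z
    simp only [Finset.mem_sdiff, Finset.mem_union]
    tauto
  have h7 : b.1 \ c.1 = T := by
    rw [hbv, hcv, hTdef]
    ext z
    have := hAe z; have := hBe z
    simp only [Finset.mem_sdiff, Finset.mem_union]
    tauto
  -- disjointness
  have dST : Disjoint S T := by
    rw [hSdef, hTdef, Finset.disjoint_left]
    intro z hz hz'
    simp only [Finset.mem_sdiff, Finset.mem_union] at hz hz'
    tauto
  have dSM : Disjoint S M := by
    rw [hSdef, hMdef, Finset.disjoint_left]
    intro z hz hz'
    simp only [Finset.mem_sdiff, Finset.mem_union, Finset.mem_inter] at hz hz'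
    tauto
  have dTM : Disjoint T M := by
    rw [hTdef, hMdef, Finset.disjoint_left]
    intro z hz hz'
    simp only [Finset.mem_sdiff, Finset.mem_union, Finset.mem_inter] at hz hz'
    tauto
  -- subset relations among configurations
  have hab : a.1 ⊆ b.1 := Finset.union_subset_union hA hB
  have hac : a.1 ⊆ c.1 := Finset.union_subset_union hA (Finset.Subset.refl _)
  have hae : a.1 ⊆ e.1 := Finset.union_subset_union (Finset.Subset.refl _) hB
  have hcb : c.1 ⊆ b.1 := Finset.union_subset_union (Finset.Subset.refl _) hB
  have heb : e.1 ⊆ b.1 := Finset.union_subset_union hA (Finset.Subset.refl _)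
  -- walks giving upper bounds
  obtain ⟨wab, hwab⟩ := ES.exists_walk_of_subset a b hab
  obtain ⟨wac, hwac⟩ := ES.exists_walk_of_subset a c hac
  obtain ⟨wae, hwae⟩ := ES.exists_walk_of_subset a e hae
  obtain ⟨wcb, hwcb⟩ := ES.exists_walk_of_subset c b hcb
  obtain ⟨web, hweb⟩ := ES.exists_walk_of_subset e b heb
  have Hac : ES.configGraph.dist a c ≤ S.card + M.card := by
    have := SimpleGraph.dist_le wac
    rw [hwac, h4, Finset.card_union_of_disjoint dSM] at this
    exact this
  have Hae : ES.configGraph.dist a e ≤ T.card + M.card := by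
    have := SimpleGraph.dist_le wae
    rw [hwae, h5, Finset.card_union_of_disjoint dTM] at this
    exact this
  have Hbe : ES.configGraph.dist b e ≤ S.card := by
    have := SimpleGraph.dist_le web.reverse
    rw [SimpleGraph.Walk.length_reverse, hweb, h6] at this
    exact this
  have Hbc : ES.configGraph.dist b c ≤ T.card := by
    have := SimpleGraph.dist_le wcb.reverse
    rw [SimpleGraph.Walk.length_reverse, hwcb, h7] at this
    exact this
  -- lower bounds
  have Hab : S.card + T.card + M.card ≤ ES.configGraph.dist a b := by
    have hr : ES.configGraph.Reachable a b := ⟨wab⟩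
    have := ES.dist_ge a b hr
    rw [Finset.sdiff_eq_empty_iff_subset.mpr hab, Finset.empty_union, h1,
      Finset.card_union_of_disjoint (Finset.disjoint_union_left.mpr ⟨dSM, dTM⟩),
      Finset.card_union_of_disjoint dST] at this
    exact this
  have Hce : S.card + T.card ≤ ES.configGraph.dist c e := by
    have hr : ES.configGraph.Reachable c e := ⟨wcb.append web.reverse⟩
    have := ES.dist_ge c e hr
    rw [h2, h3, Finset.card_union_of_disjoint dST] at this
    exact this
  -- hyperbolicity contradiction
  have hkey := hδ a b c e
  have hs : δ + 1 ≤ S.card := hScard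
  have ht : δ + 1 ≤ T.card := hTcard
  omega
end
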